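/- arXiv:2308.03362 — 6 statements merged into one kernel-verified Lean document; each statement's English description precedes it below -/
import Mathlib

section
/- Let δ > 0 and define m : [0,∞) × (0,∞) → ℝ by m(t,ρ) = (1/(ρ√(δ²ρ² − 4)))·(e^{(−δρ² + ρ√(δ²ρ² − 4))t/2} − e^{(−δρ² − ρ√(δ²ρ² − 4))t/2}) if ρ > 2/δ, and m(t,ρ) = (2/(ρ√(4 − δ²ρ²)))·e^{−δρ²t/2}·sin(tρ√(4 − δ²ρ²)/2) if 0 < ρ < 2/δ, and m(t, 2/δ) = t·e^{−2t/δ}. Then there exists a constant C > 0 such that |m(t,ρ) − m(t₀,ρ)| ≤ C|t − t₀| for all t, t₀ ≥ 0 and all ρ > 0. -/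
open Real Set

private lemma aux_xexp {x : ℝ} (hx : 0 ≤ x) : x * Real.exp (-x) ≤ 1 := by
  have h1 : x + 1 ≤ Real.exp x := Real.add_one_le_exp x
  have h2 : Real.exp (-x) * Real.exp x = 1 := by
    rw [← Real.exp_add]; simp
  have h3 := mul_le_mul_of_nonneg_left h1 (Real.exp_pos (-x)).le
  nlinarith [Real.exp_pos (-x)]

private lemma lip_of_deriv {f f' : ℝ → ℝ}
    (hf : ∀ x ∈ Ici (0:ℝ), HasDerivAt f (f' x) x)
    (hb : ∀ x ∈ Ici (0:ℝ), |f' x| ≤ 2)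
    {t t₀ : ℝ} (ht : 0 ≤ t) (ht₀ : 0 ≤ t₀) :
    |f t - f t₀| ≤ 2 * |t - t₀| := by
  have h := (convex_Ici (0:ℝ)).norm_image_sub_le_of_norm_hasDerivWithin_le
    (f' := f') (fun x hx => (hf x hx).hasDerivWithinAt)
    (fun x hx => by simpa using hb x hx) ht₀ ht
  simpa [Real.norm_eq_abs] using h

private lemma caseA (μ₁ μ₂ : ℝ) (h1 : μ₁ < 0) (h2 : μ₂ < μ₁)
    {t t₀ : ℝ} (ht : 0 ≤ t) (ht₀ : 0 ≤ t₀) :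
    |(1/(μ₁ - μ₂)) * (Real.exp (μ₁*t) - Real.exp (μ₂*t)) -
     (1/(μ₁ - μ₂)) * (Real.exp (μ₁*t₀) - Real.exp (μ₂*t₀))| ≤ 2 * |t - t₀| := by
  have hD : 0 < μ₁ - μ₂ := sub_pos.2 h2
  refine lip_of_deriv
    (f := fun x => (1/(μ₁ - μ₂)) * (Real.exp (μ₁*x) - Real.exp (μ₂*x)))
    (f' := fun x => (1/(μ₁ - μ₂)) * (Real.exp (μ₁*x) * μ₁ - Real.exp (μ₂*x) * μ₂))
    ?_ ?_ ht ht₀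
  · intro x _
    have e1 : HasDerivAt (fun y : ℝ => Real.exp (μ₁*y)) (Real.exp (μ₁*x) * μ₁) x := by
      simpa using ((hasDerivAt_id x).const_mul μ₁).exp
    have e2 : HasDerivAt (fun y : ℝ => Real.exp (μ₂*y)) (Real.exp (μ₂*x) * μ₂) x := by
      simpa using ((hasDerivAt_id x).const_mul μ₂).exp
    exact (e1.sub e2).const_mul _
  · intro x hx
    have hx : (0:ℝ) ≤ x := hx
    have hE1pos : 0 < Real.exp (μ₁*x) := Real.exp_pos _
    have hE2pos : 0 < Real.exp (μ₂*x) := Real.exp_pos _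
    have hE1le : Real.exp (μ₁*x) ≤ 1 := Real.exp_le_one_iff.2 (mul_nonpos_of_nonpos_of_nonneg h1.le hx)
    have hE2le : Real.exp (μ₂*x) ≤ 1 := Real.exp_le_one_iff.2 (mul_nonpos_of_nonpos_of_nonneg (h2.trans h1).le hx)
    have hle : Real.exp (μ₂*x) ≤ Real.exp (μ₁*x) :=
      Real.exp_le_exp.2 (mul_le_mul_of_nonneg_right h2.le hx)
    have hdiff : Real.exp (μ₁*x) - Real.exp (μ₂*x) ≤ (μ₁ - μ₂) * x * Real.exp (μ₁*x) := by
      have h3 : -((μ₁-μ₂)*x) + 1 ≤ Real.exp (-((μ₁-μ₂)*x)) := Real.add_one_le_exp _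
      have h4 : Real.exp (μ₁*x) * Real.exp (-((μ₁-μ₂)*x)) = Real.exp (μ₂*x) := by
        rw [← Real.exp_add]; ring_nf
      nlinarith [mul_le_mul_of_nonneg_left h3 hE1pos.le]
    have haux : (-μ₁) * x * Real.exp (μ₁*x) ≤ 1 := by
      have h5 := aux_xexp (x := (-μ₁)*x) (by nlinarith)
      rw [show -((-μ₁)*x) = μ₁*x by ring] at h5
      linarith [h5]
    have key : |Real.exp (μ₁*x) * μ₁ - Real.exp (μ₂*x) * μ₂| ≤ μ₁ - μ₂ := by
      rw [abs_le]
      constructor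
      · nlinarith [mul_le_mul_of_nonpos_left hdiff h1.le,
          mul_le_mul_of_nonneg_left haux hD.le, mul_pos hD hE2pos]
      · nlinarith [mul_nonpos_of_nonpos_of_nonneg h1.le (sub_nonneg.2 hle),
          mul_le_mul_of_nonneg_left hE2le hD.le]
    have h1D : |1/(μ₁-μ₂)| = 1/(μ₁-μ₂) := abs_of_pos (by positivity)
    calc |(1/(μ₁ - μ₂)) * (Real.exp (μ₁*x) * μ₁ - Real.exp (μ₂*x) * μ₂)|
        = (1/(μ₁-μ₂)) * |Real.exp (μ₁*x) * μ₁ - Real.exp (μ₂*x) * μ₂| := by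
          rw [abs_mul, h1D]
      _ ≤ (1/(μ₁-μ₂)) * (μ₁ - μ₂) := by
          exact mul_le_mul_of_nonneg_left key (by positivity)
      _ = 1 := by field_simp
      _ ≤ 2 := by norm_num

private lemma caseB (a b : ℝ) (ha : 0 ≤ a) (hb : 0 < b)
    {t t₀ : ℝ} (ht : 0 ≤ t) (ht₀ : 0 ≤ t₀) :
    |(1/b) * (Real.exp (-(a*t)) * Real.sin (b*t)) -
     (1/b) * (Real.exp (-(a*t₀)) * Real.sin (b*t₀))| ≤ 2 * |t - t₀| := by
  refine lip_of_deriv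
    (f := fun x => (1/b) * (Real.exp (-(a*x)) * Real.sin (b*x)))
    (f' := fun x => (1/b) * (Real.exp (-(a*x)) * (-a) * Real.sin (b*x) +
        Real.exp (-(a*x)) * (Real.cos (b*x) * b)))
    ?_ ?_ ht ht₀
  · intro x _
    have e1 : HasDerivAt (fun y : ℝ => Real.exp (-(a*y))) (Real.exp (-(a*x)) * (-a)) x := by
      simpa using (((hasDerivAt_id x).const_mul a).neg).exp
    have e2 : HasDerivAt (fun y : ℝ => Real.sin (b*y)) (Real.cos (b*x) * b) x := by
      simpa using ((hasDerivAt_id x).const_mul b).sin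
    exact (e1.mul e2).const_mul _
  · intro x hx
    have hx : (0:ℝ) ≤ x := hx
    have hEpos : 0 < Real.exp (-(a*x)) := Real.exp_pos _
    have hEle : Real.exp (-(a*x)) ≤ 1 := Real.exp_le_one_iff.2 (by nlinarith)
    have hS : |Real.sin (b*x)| ≤ b*x := by
      calc |Real.sin (b*x)| ≤ |b*x| := Real.abs_sin_le_abs
        _ = b*x := abs_of_nonneg (by positivity)
    have hC : |Real.cos (b*x)| ≤ 1 := Real.abs_cos_le_one _
    have haux : (a*x) * Real.exp (-(a*x)) ≤ 1 := aux_xexp (by positivity)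
    have k1 : |Real.exp (-(a*x)) * (-a) * Real.sin (b*x)| ≤ b := by
      rw [abs_mul, abs_mul, abs_neg, abs_of_nonneg ha, abs_of_pos hEpos]
      calc Real.exp (-(a*x)) * a * |Real.sin (b*x)|
          ≤ Real.exp (-(a*x)) * a * (b*x) := by
            exact mul_le_mul_of_nonneg_left hS (by positivity)
        _ = b * ((a*x) * Real.exp (-(a*x))) := by ring
        _ ≤ b * 1 := mul_le_mul_of_nonneg_left haux hb.le
        _ = b := mul_one b
    have k2 : |Real.exp (-(a*x)) * (Real.cos (b*x) * b)| ≤ b := by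
      rw [abs_mul, abs_mul, abs_of_pos hEpos, abs_of_pos hb]
      nlinarith [abs_nonneg (Real.cos (b*x)),
        mul_le_mul_of_nonneg_left (mul_le_mul_of_nonneg_right hC hb.le) hEpos.le,
        mul_le_mul_of_nonneg_right hEle hb.le]
    have key : |Real.exp (-(a*x)) * (-a) * Real.sin (b*x) +
        Real.exp (-(a*x)) * (Real.cos (b*x) * b)| ≤ 2*b :=
      (abs_add_le _ _).trans (by linarith)
    rw [abs_mul, abs_of_pos (show (0:ℝ) < 1/b by positivity)]
    calc (1/b) * |Real.exp (-(a*x)) * (-a) * Real.sin (b*x) +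
        Real.exp (-(a*x)) * (Real.cos (b*x) * b)|
        ≤ (1/b) * (2*b) := mul_le_mul_of_nonneg_left key (by positivity)
      _ = 2 := by field_simp
      _ ≤ 2 := le_refl _

private lemma caseC (c : ℝ) (hc : 0 < c) {t t₀ : ℝ} (ht : 0 ≤ t) (ht₀ : 0 ≤ t₀) :
    |t * Real.exp (-(c*t)) - t₀ * Real.exp (-(c*t₀))| ≤ 2 * |t - t₀| := by
  refine lip_of_deriv
    (f := fun x => x * Real.exp (-(c*x)))
    (f' := fun x => 1 * Real.exp (-(c*x)) + x * (Real.exp (-(c*x)) * (-c)))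
    ?_ ?_ ht ht₀
  · intro x _
    have e1 : HasDerivAt (fun y : ℝ => Real.exp (-(c*y))) (Real.exp (-(c*x)) * (-c)) x := by
      simpa using (((hasDerivAt_id x).const_mul c).neg).exp
    exact (hasDerivAt_id x).mul e1
  · intro x hx
    have hx : (0:ℝ) ≤ x := hx
    have hEpos : 0 < Real.exp (-(c*x)) := Real.exp_pos _
    have hEle : Real.exp (-(c*x)) ≤ 1 := Real.exp_le_one_iff.2 (by nlinarith)
    have haux : (c*x) * Real.exp (-(c*x)) ≤ 1 := aux_xexp (by positivity)
    show |1 * Real.exp (-(c*x)) + x * (Real.exp (-(c*x)) * (-c))| ≤ 2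
    rw [abs_le]
    constructor <;> nlinarith [mul_nonneg (mul_nonneg hc.le hx) hEpos.le]

/-- The Fourier multiplier `m(t,ρ)` of the strongly damped wave
equation is uniformly Lipschitz in `t`: there is `C > 0` with
`|m(t,ρ) - m(t₀,ρ)| ≤ C |t - t₀|` for all `t, t₀ ≥ 0` and `ρ > 0`. -/
theorem strongly_damped_multiplier_lipschitz
    (δ : ℝ) (hδ : 0 < δ) (m : ℝ → ℝ → ℝ)
    (hm : ∀ t ρ : ℝ, m t ρ =
      if 2 / δ < ρ then
        (1 / (ρ * Real.sqrt (δ ^ 2 * ρ ^ 2 - 4))) *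
          (Real.exp ((-(δ * ρ ^ 2) + ρ * Real.sqrt (δ ^ 2 * ρ ^ 2 - 4)) * t / 2) -
            Real.exp ((-(δ * ρ ^ 2) - ρ * Real.sqrt (δ ^ 2 * ρ ^ 2 - 4)) * t / 2))
      else if ρ < 2 / δ then
        (2 / (ρ * Real.sqrt (4 - δ ^ 2 * ρ ^ 2))) * Real.exp (-(δ * ρ ^ 2 * t) / 2) *
          Real.sin (t * ρ * Real.sqrt (4 - δ ^ 2 * ρ ^ 2) / 2)
      else t * Real.exp (-(2 * t) / δ)) :
    ∃ C > 0, ∀ t ≥ (0 : ℝ), ∀ t₀ ≥ (0 : ℝ), ∀ ρ > (0 : ℝ),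
      |m t ρ - m t₀ ρ| ≤ C * |t - t₀| := by
  refine ⟨2, by norm_num, ?_⟩
  intro t ht t₀ ht₀ ρ hρ
  rcases lt_trichotomy ρ (2/δ) with h | h | h
  · -- underdamped: ρ < 2/δ
    have hδρ : δ * ρ < 2 := by
      have h2 := (lt_div_iff₀ hδ).mp h
      nlinarith [h2]
    have hs4 : 0 < 4 - δ^2*ρ^2 := by nlinarith [mul_pos hδ hρ]
    set s := Real.sqrt (4 - δ^2*ρ^2) with hsdef
    have hspos : 0 < s := Real.sqrt_pos.2 hs4
    have hb : 0 < ρ * s / 2 := by positivity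
    have ha : 0 ≤ δ * ρ^2 / 2 := by positivity
    have em : ∀ τ:ℝ, m τ ρ =
        (1/(ρ*s/2)) * (Real.exp (-((δ*ρ^2/2)*τ)) * Real.sin ((ρ*s/2)*τ)) := by
      intro τ
      rw [hm, if_neg (by linarith), if_pos h, ← hsdef,
        show -(δ*ρ^2*τ)/2 = -((δ*ρ^2/2)*τ) by ring,
        show τ*ρ*s/2 = (ρ*s/2)*τ by ring]
      ring
    rw [em t, em t₀]
    exact caseB _ _ ha hb ht ht₀
  · -- critical: ρ = 2/δ
    have em : ∀ τ:ℝ, m τ ρ = τ * Real.exp (-((2/δ)*τ)) := by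
      intro τ
      rw [hm, if_neg (by rw [h]; exact lt_irrefl _), if_neg (by rw [h]; exact lt_irrefl _),
        show -(2*τ)/δ = -((2/δ)*τ) by ring]
    rw [em t, em t₀]
    exact caseC _ (by positivity) ht ht₀
  · -- overdamped: 2/δ < ρ
    have hδρ : 2 < δ * ρ := by
      have h2 := (div_lt_iff₀ hδ).mp h
      nlinarith [h2]
    have hs4 : 0 < δ^2*ρ^2 - 4 := by nlinarith
    set s := Real.sqrt (δ^2*ρ^2 - 4) with hsdef
    have hspos : 0 < s := Real.sqrt_pos.2 hs4
    have hssq : s^2 = δ^2*ρ^2 - 4 := Real.sq_sqrt hs4.le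
    have hslt : s < δ*ρ := by nlinarith [mul_pos hδ hρ]
    have hμ₁ : (-(δ*ρ^2) + ρ*s)/2 < 0 := by nlinarith [mul_lt_mul_of_pos_left hslt hρ]
    have hμ₂ : (-(δ*ρ^2) - ρ*s)/2 < (-(δ*ρ^2) + ρ*s)/2 := by nlinarith [mul_pos hρ hspos]
    have em : ∀ τ:ℝ, m τ ρ =
        (1/((-(δ*ρ^2) + ρ*s)/2 - (-(δ*ρ^2) - ρ*s)/2)) *
          (Real.exp (((-(δ*ρ^2) + ρ*s)/2)*τ) - Real.exp (((-(δ*ρ^2) - ρ*s)/2)*τ)) := by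
      intro τ
      rw [hm, if_pos h, ← hsdef,
        show (-(δ*ρ^2) + ρ*s)*τ/2 = ((-(δ*ρ^2) + ρ*s)/2)*τ by ring,
        show (-(δ*ρ^2) - ρ*s)*τ/2 = ((-(δ*ρ^2) - ρ*s)/2)*τ by ring,
        show (-(δ*ρ^2) + ρ*s)/2 - (-(δ*ρ^2) - ρ*s)/2 = ρ*s by ring]
    rw [em t, em t₀]
    exact caseA _ _ hμ₁ hμ₂ ht ht₀
end

section
/- Let γ > 0 and define m : [0,∞) × (0,∞) → ℝ by m(t,ρ) = (1/√(γ² − 4ρ²))·(e^{(−γ + √(γ² − 4ρ²))t/2} − e^{(−γ − √(γ² − 4ρ²))t/2}) if 0 < ρ < γ/2, and m(t,ρ) = (2/√(4ρ² − γ²))·e^{−γt/2}·sin(t√(4ρ² − γ²)/2) if ρ > γ/2, and m(t, γ/2) = t·e^{−γt/2}. Then there exists a constant C > 0 such that |m(t,ρ) − m(t₀,ρ)| ≤ C|t − t₀| for all t, t₀ ≥ 0 and all ρ > 0. -/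
set_option maxHeartbeats 1000000

lemma abs_sin_le_abs' (y : ℝ) : |Real.sin y| ≤ |y| := by
  rcases eq_or_ne y 0 with rfl | hy
  · simp
  · exact (Real.abs_sin_lt_abs hy).le

/-- Helper: derivative bound on `Ici 0` gives the Lipschitz estimate. -/
lemma lip_of_deriv_bound (f f' : ℝ → ℝ) (C : ℝ)
    (hf : ∀ x ∈ Set.Ici (0:ℝ), HasDerivAt f (f' x) x)
    (hb : ∀ x ∈ Set.Ici (0:ℝ), |f' x| ≤ C)
    {t t₀ : ℝ} (ht : 0 ≤ t) (ht₀ : 0 ≤ t₀) :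
    |f t - f t₀| ≤ C * |t - t₀| := by
  have := Convex.norm_image_sub_le_of_norm_hasDerivWithin_le
    (f := f) (f' := f') (s := Set.Ici (0:ℝ)) (C := C)
    (fun x hx => (hf x hx).hasDerivWithinAt)
    (fun x hx => by simpa [Real.norm_eq_abs] using hb x hx)
    (convex_Ici 0) ht₀ ht
  simpa [Real.norm_eq_abs] using this

lemma exp_deriv' (c : ℝ) (x : ℝ) :
    HasDerivAt (fun x : ℝ => Real.exp (c * x / 2)) (c / 2 * Real.exp (c * x / 2)) x := by
  have h : HasDerivAt (fun x : ℝ => c * x / 2) (c / 2) x := by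
    simpa using ((hasDerivAt_id x).const_mul c).div_const 2
  exact ((Real.hasDerivAt_exp (c * x / 2)).comp x h).congr_deriv (mul_comm _ _)

lemma exp_deriv'' (γ : ℝ) (x : ℝ) :
    HasDerivAt (fun x : ℝ => Real.exp (-(γ * x) / 2)) (-γ / 2 * Real.exp (-(γ * x) / 2)) x := by
  have := exp_deriv' (-γ) x
  simp only [neg_mul] at this ⊢
  exact this



/-- The Fourier multiplier `m(t,ρ)` of the weakly damped wave
equation is uniformly Lipschitz in `t`: there is `C > 0` with
`|m(t,ρ) - m(t₀,ρ)| ≤ C |t - t₀|` for all `t, t₀ ≥ 0` and `ρ > 0`. -/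
theorem weakly_damped_multiplier_lipschitz
    (γ : ℝ) (hγ : 0 < γ) (m : ℝ → ℝ → ℝ)
    (hm : ∀ t ρ : ℝ, m t ρ =
      if ρ < γ / 2 then
        (1 / Real.sqrt (γ ^ 2 - 4 * ρ ^ 2)) *
          (Real.exp ((-γ + Real.sqrt (γ ^ 2 - 4 * ρ ^ 2)) * t / 2) -
            Real.exp ((-γ - Real.sqrt (γ ^ 2 - 4 * ρ ^ 2)) * t / 2))
      else if γ / 2 < ρ then
        (2 / Real.sqrt (4 * ρ ^ 2 - γ ^ 2)) * Real.exp (-(γ * t) / 2) *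
          Real.sin (t * Real.sqrt (4 * ρ ^ 2 - γ ^ 2) / 2)
      else t * Real.exp (-(γ * t) / 2)) :
    ∃ C > 0, ∀ t ≥ (0 : ℝ), ∀ t₀ ≥ (0 : ℝ), ∀ ρ > (0 : ℝ),
      |m t ρ - m t₀ ρ| ≤ C * |t - t₀| := by
  refine ⟨2, by norm_num, ?_⟩
  intro t ht t₀ ht₀ ρ hρ
  rw [hm, hm]
  rcases lt_trichotomy ρ (γ / 2) with h | h | h
  · -- underdamped-exponential case: 0 < ρ < γ/2
    simp only [if_pos h]
    have hD : 0 < γ ^ 2 - 4 * ρ ^ 2 := by nlinarith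
    set d := Real.sqrt (γ ^ 2 - 4 * ρ ^ 2) with hd
    have hd0 : 0 < d := Real.sqrt_pos.mpr hD
    have hdγ : d < γ := by
      have h2 : d ^ 2 < γ ^ 2 := by rw [hd, Real.sq_sqrt hD.le]; nlinarith
      nlinarith
    refine lip_of_deriv_bound
      (fun x => 1 / d * (Real.exp ((-γ + d) * x / 2) - Real.exp ((-γ - d) * x / 2)))
      (fun x => 1 / d * ((-γ + d) / 2 * Real.exp ((-γ + d) * x / 2)
        - (-γ - d) / 2 * Real.exp ((-γ - d) * x / 2))) 2 ?_ ?_ ht ht₀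
    · intro x _
      exact ((exp_deriv' (-γ + d) x).sub (exp_deriv' (-γ - d) x)).const_mul (1 / d)
    · intro x hx
      simp only [Set.mem_Ici] at hx
      beta_reduce
      set EA := Real.exp ((-γ + d) * x / 2) with hEA
      set EB := Real.exp ((-γ - d) * x / 2) with hEB
      have hEApos : 0 < EA := Real.exp_pos _
      have hEBpos : 0 < EB := Real.exp_pos _
      have hEA1 : EA ≤ 1 := by
        rw [hEA, Real.exp_le_one_iff]; nlinarith
      have hEB1 : EB ≤ 1 := by
        rw [hEB, Real.exp_le_one_iff]; nlinarith
      have hle : EB ≤ EA := by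
        rw [hEA, hEB, Real.exp_le_exp]; nlinarith
      -- key1 : EA - EB ≤ EA * (d * x)
      have hk1 : EA - EB ≤ EA * (d * x) := by
        have h1 := Real.add_one_le_exp (((-γ - d) * x / 2) - ((-γ + d) * x / 2))
        have h2 : Real.exp (((-γ - d) * x / 2) - ((-γ + d) * x / 2)) * EA = EB := by
          rw [hEA, hEB, ← Real.exp_add]; ring_nf
        nlinarith [hEApos]
      -- key2 : (γ - d)/2 * x * EA ≤ 1
      have hk2 : (γ - d) / 2 * x * EA ≤ 1 := by
        have h1 := Real.add_one_le_exp (-((-γ + d) * x / 2))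
        have h2 : Real.exp (-((-γ + d) * x / 2)) * EA = 1 := by
          rw [hEA, ← Real.exp_add]; ring_nf; exact Real.exp_zero
        nlinarith [hEApos]
      have hXle : (-γ + d) / 2 * EA - (-γ - d) / 2 * EB ≤ 2 * d := by
        nlinarith [mul_nonneg (show (0:ℝ) ≤ (γ - d) / 2 by linarith)
          (show (0:ℝ) ≤ EA - EB by linarith),
          mul_nonneg hd0.le (show (0:ℝ) ≤ 1 - EB by linarith)]
      have hXge : -(2 * d) ≤ (-γ + d) / 2 * EA - (-γ - d) / 2 * EB := by
        nlinarith [mul_le_mul_of_nonneg_left hk1 (show (0:ℝ) ≤ (γ - d) / 2 by linarith),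
          mul_le_mul_of_nonneg_left hk2 hd0.le,
          mul_nonneg hd0.le hEBpos.le]
      have habs : |(-γ + d) / 2 * EA - (-γ - d) / 2 * EB| ≤ 2 * d :=
        abs_le.mpr ⟨hXge, hXle⟩
      calc |1 / d * ((-γ + d) / 2 * EA - (-γ - d) / 2 * EB)|
          = 1 / d * |(-γ + d) / 2 * EA - (-γ - d) / 2 * EB| := by
            rw [abs_mul, abs_of_nonneg (by positivity : (0:ℝ) ≤ 1 / d)]
        _ ≤ 1 / d * (2 * d) := by
            exact mul_le_mul_of_nonneg_left habs (by positivity)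
        _ = 2 := by field_simp
  · -- critical case ρ = γ/2
    have h1 : ¬ ρ < γ / 2 := by linarith
    have h2 : ¬ γ / 2 < ρ := by linarith
    simp only [if_neg h1, if_neg h2]
    refine lip_of_deriv_bound
      (fun x => x * Real.exp (-(γ * x) / 2))
      (fun x => 1 * Real.exp (-(γ * x) / 2) + x * (-γ / 2 * Real.exp (-(γ * x) / 2)))
      2 ?_ ?_ ht ht₀
    · intro x _
      exact (hasDerivAt_id x).mul (exp_deriv'' γ x)
    · intro x hx
      simp only [Set.mem_Ici] at hx
      beta_reduce
      set E := Real.exp (-(γ * x) / 2) with hE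
      have hEpos : 0 < E := Real.exp_pos _
      have hE1 : E ≤ 1 := by rw [hE, Real.exp_le_one_iff]; nlinarith
      have hk : γ * x / 2 * E ≤ 1 := by
        have h1 := Real.add_one_le_exp (γ * x / 2)
        have h2 : Real.exp (γ * x / 2) * E = 1 := by
          rw [hE, ← Real.exp_add]; ring_nf; exact Real.exp_zero
        nlinarith
      rw [abs_le]
      constructor <;> nlinarith [mul_nonneg (mul_nonneg hγ.le hx) hEpos.le]
  · -- oscillatory case ρ > γ/2
    have h1 : ¬ ρ < γ / 2 := by linarith
    simp only [if_neg h1, if_pos h]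
    have hE' : 0 < 4 * ρ ^ 2 - γ ^ 2 := by nlinarith
    set e := Real.sqrt (4 * ρ ^ 2 - γ ^ 2) with he
    have he0 : 0 < e := Real.sqrt_pos.mpr hE'
    refine lip_of_deriv_bound
      (fun x => 2 / e * Real.exp (-(γ * x) / 2) * Real.sin (x * e / 2))
      (fun x => (2 / e * (-γ / 2 * Real.exp (-(γ * x) / 2))) * Real.sin (x * e / 2)
        + (2 / e * Real.exp (-(γ * x) / 2)) * (Real.cos (x * e / 2) * (e / 2)))
      2 ?_ ?_ ht ht₀
    · intro x _
      have hsin : HasDerivAt (fun x : ℝ => Real.sin (x * e / 2))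
          (Real.cos (x * e / 2) * (e / 2)) x := by
        have hi : HasDerivAt (fun x : ℝ => x * e / 2) (e / 2) x := by
          simpa using ((hasDerivAt_id x).mul_const e).div_const 2
        exact (Real.hasDerivAt_sin (x * e / 2)).comp x hi
      exact (((exp_deriv'' γ x).const_mul (2 / e)).mul hsin)
    · intro x hx
      simp only [Set.mem_Ici] at hx
      beta_reduce
      set E := Real.exp (-(γ * x) / 2) with hE
      set S := Real.sin (x * e / 2) with hS
      set Co := Real.cos (x * e / 2) with hCo
      have hEpos : 0 < E := Real.exp_pos _
      have hE1 : E ≤ 1 := by rw [hE, Real.exp_le_one_iff]; nlinarith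
      have hk : γ * x / 2 * E ≤ 1 := by
        have h1 := Real.add_one_le_exp (γ * x / 2)
        have h2 : Real.exp (γ * x / 2) * E = 1 := by
          rw [hE, ← Real.exp_add]; ring_nf; exact Real.exp_zero
        nlinarith
      have hSle : |S| ≤ x * e / 2 :=
        le_trans (abs_sin_le_abs' _) (le_of_eq (abs_of_nonneg (by positivity)))
      have hCle : |Co| ≤ 1 := Real.abs_cos_le_one _
      have hA : |2 / e * (-γ / 2 * E) * S| ≤ 1 := by
        have heq : 2 / e * (-γ / 2 * E) * S = -(γ / e * E * S) := by ring
        rw [heq, abs_neg, abs_mul, abs_of_nonneg (by positivity : (0:ℝ) ≤ γ / e * E)]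
        have h1 : γ / e * E * |S| ≤ γ / e * E * (x * e / 2) :=
          mul_le_mul_of_nonneg_left hSle (by positivity)
        have h2 : γ / e * E * (x * e / 2) = γ * x / 2 * E := by
          field_simp
        linarith [h1, h2 ▸ h1, hk]
      have hB : |2 / e * E * (Co * (e / 2))| ≤ 1 := by
        have heq : 2 / e * E * (Co * (e / 2)) = E * Co := by field_simp
        rw [heq, abs_mul, abs_of_nonneg hEpos.le]
        nlinarith [abs_nonneg Co]
      calc |2 / e * (-γ / 2 * E) * S + 2 / e * E * (Co * (e / 2))|
          ≤ |2 / e * (-γ / 2 * E) * S| + |2 / e * E * (Co * (e / 2))| := abs_add_le _ _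
        _ ≤ 2 := by linarith
end

section
/- Let δ > 0 and ρ > 0 with ρ ≠ 2/δ, and let m(t,ρ) = (1/(ρ√(δ²ρ² − 4)))·(e^{(−δρ² + ρ√(δ²ρ² − 4))t/2} − e^{(−δρ² − ρ√(δ²ρ² − 4))t/2}) if ρ > 2/δ, and m(t,ρ) = (2/(ρ√(4 − δ²ρ²)))·e^{−δρ²t/2}·sin(tρ√(4 − δ²ρ²)/2) if 0 < ρ < 2/δ. Then ∫₀^∞ m(t,ρ)² dt = 1/(2δρ⁴). -/
open MeasureTheory Filter Real

private lemma exp_lin_tendsto {k : ℝ} (hk : k < 0) :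
    Tendsto (fun t => Real.exp (k * t)) atTop (nhds 0) :=
  Real.tendsto_exp_comp_nhds_zero.mpr ((tendsto_const_mul_atBot_of_neg hk).mpr tendsto_id)

private lemma aux_case1 (α β c : ℝ) (hα : α < 0) (hβ : β < 0) :
    ∫ t in Set.Ioi (0:ℝ), (c * (Real.exp (α*t) - Real.exp (β*t)))^2
      = c^2 * (-(1/(2*α)) + 2/(α+β) - 1/(2*β)) := by
  have hαβ : α + β < 0 := by linarith
  set F : ℝ → ℝ := fun t => c^2 * (Real.exp (2*α*t)/(2*α)
      - 2*Real.exp ((α+β)*t)/(α+β) + Real.exp (2*β*t)/(2*β)) with hF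
  have hderiv : ∀ x ∈ Set.Ici (0:ℝ),
      HasDerivAt F ((c*(Real.exp (α*x) - Real.exp (β*x)))^2) x := by
    intro x _
    have h1 : HasDerivAt (fun t : ℝ => Real.exp (2*α*t)) (Real.exp (2*α*x)*(2*α)) x := by
      simpa using ((hasDerivAt_id x).const_mul (2*α)).exp
    have h2 : HasDerivAt (fun t : ℝ => Real.exp ((α+β)*t)) (Real.exp ((α+β)*x)*(α+β)) x := by
      simpa using ((hasDerivAt_id x).const_mul (α+β)).exp
    have h3 : HasDerivAt (fun t : ℝ => Real.exp (2*β*t)) (Real.exp (2*β*x)*(2*β)) x := by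
      simpa using ((hasDerivAt_id x).const_mul (2*β)).exp
    have hD := (((h1.div_const (2*α)).sub ((h2.const_mul 2).div_const (α+β))).add
      (h3.div_const (2*β))).const_mul (c^2)
    refine hD.congr_deriv ?_
    have e1 : Real.exp (2*α*x) = Real.exp (α*x)^2 := by rw [sq, ← Real.exp_add]; congr 1; ring
    have e2 : Real.exp ((α+β)*x) = Real.exp (α*x)*Real.exp (β*x) := by
      rw [← Real.exp_add]; congr 1; ring
    have e3 : Real.exp (2*β*x) = Real.exp (β*x)^2 := by rw [sq, ← Real.exp_add]; congr 1; ring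
    rw [e1, e2, e3]
    field_simp [hα.ne, hβ.ne, hαβ.ne]
    ring
  have htend : Tendsto F atTop (nhds 0) := by
    have := ((((exp_lin_tendsto (by linarith : 2*α < 0)).div_const (2*α)).sub
      (((exp_lin_tendsto hαβ).const_mul 2).div_const (α+β))).add
      ((exp_lin_tendsto (by linarith : 2*β < 0)).div_const (2*β))).const_mul (c^2)
    rw [hF]
    simpa using this
  have hint := integral_Ioi_of_hasDerivAt_of_nonneg' hderiv (fun x _ => sq_nonneg _) htend
  rw [hint]
  simp only [hF, mul_zero, Real.exp_zero]
  ring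

private lemma aux_case2 (p q c : ℝ) (hp : p < 0) (hq : q ≠ 0) :
    ∫ t in Set.Ioi (0:ℝ), (c * Real.exp (p*t/2) * Real.sin (q*t/2))^2
      = c^2 * q^2 / (2*(-p)*(p^2+q^2)) := by
  have hpq : 0 < p^2 + q^2 := by positivity
  set F : ℝ → ℝ := fun t => c^2 * (Real.exp (p*t)/(2*p)
      - Real.exp (p*t)*(p*Real.cos (q*t) + q*Real.sin (q*t))/(2*(p^2+q^2))) with hF
  have hderiv : ∀ x ∈ Set.Ici (0:ℝ),
      HasDerivAt F ((c * Real.exp (p*x/2) * Real.sin (q*x/2))^2) x := by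
    intro x _
    have h1 : HasDerivAt (fun t : ℝ => Real.exp (p*t)) (Real.exp (p*x)*p) x := by
      simpa using ((hasDerivAt_id x).const_mul p).exp
    have hcos : HasDerivAt (fun t : ℝ => Real.cos (q*t)) (-Real.sin (q*x)*q) x := by
      simpa using ((hasDerivAt_id x).const_mul q).cos
    have hsin : HasDerivAt (fun t : ℝ => Real.sin (q*t)) (Real.cos (q*x)*q) x := by
      simpa using ((hasDerivAt_id x).const_mul q).sin
    have h2 := h1.mul ((hcos.const_mul p).add (hsin.const_mul q))
    have hD := ((h1.div_const (2*p)).sub (h2.div_const (2*(p^2+q^2)))).const_mul (c^2)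
    refine hD.congr_deriv ?_
    have e : Real.exp (p*x/2)^2 = Real.exp (p*x) := by rw [sq, ← Real.exp_add]; congr 1; ring
    have s : Real.sin (q*x/2)^2 = 1/2 - Real.cos (q*x)/2 := by
      rw [Real.sin_sq_eq_half_sub]; ring_nf
    rw [mul_pow, mul_pow, e, s]
    simp only [Pi.add_apply]
    field_simp [hp.ne]
    ring
  have htend : Tendsto F atTop (nhds 0) := by
    have T2 : Tendsto (fun t => Real.exp (p*t)*(p*Real.cos (q*t) + q*Real.sin (q*t)))
        atTop (nhds 0) := by
      apply squeeze_zero_norm (a := fun t => Real.exp (p*t) * (abs p + abs q))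
      · intro t
        rw [Real.norm_eq_abs, abs_mul, abs_of_pos (Real.exp_pos _)]
        have hb : |p*Real.cos (q*t) + q*Real.sin (q*t)| ≤ abs p + abs q := by
          calc |p*Real.cos (q*t) + q*Real.sin (q*t)|
              ≤ |p*Real.cos (q*t)| + |q*Real.sin (q*t)| := abs_add_le _ _
            _ ≤ abs p * 1 + abs q * 1 := by
                rw [abs_mul, abs_mul]
                gcongr
                · exact Real.abs_cos_le_one _
                · exact Real.abs_sin_le_one _
            _ = abs p + abs q := by ring
        exact mul_le_mul_of_nonneg_left hb (Real.exp_pos _).le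
      · simpa using (exp_lin_tendsto hp).mul_const (abs p + abs q)
    have := (((exp_lin_tendsto hp).div_const (2*p)).sub
      (T2.div_const (2*(p^2+q^2)))).const_mul (c^2)
    rw [hF]
    simpa using this
  have hint := integral_Ioi_of_hasDerivAt_of_nonneg' hderiv (fun x _ => sq_nonneg _) htend
  rw [hint]
  simp only [hF, mul_zero, Real.exp_zero, Real.cos_zero, Real.sin_zero]
  field_simp [hp.ne, hpq.ne']
  ring

/-- For `δ > 0` and `ρ > 0` with `ρ ≠ 2/δ`, the strongly damped
wave multiplier `t ↦ m(t,ρ)` satisfies `∫₀^∞ m(t,ρ)² dt = 1/(2δρ⁴)`. -/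
theorem integral_sq_strongly_damped_multiplier
    (δ ρ : ℝ) (hδ : 0 < δ) (hρ : 0 < ρ) (hne : ρ ≠ 2 / δ)
    (m : ℝ → ℝ)
    (hm₁ : 2 / δ < ρ → m = fun t =>
      (1 / (ρ * Real.sqrt (δ ^ 2 * ρ ^ 2 - 4))) *
        (Real.exp ((-(δ * ρ ^ 2) + ρ * Real.sqrt (δ ^ 2 * ρ ^ 2 - 4)) * t / 2) -
          Real.exp ((-(δ * ρ ^ 2) - ρ * Real.sqrt (δ ^ 2 * ρ ^ 2 - 4)) * t / 2)))
    (hm₂ : ρ < 2 / δ → m = fun t =>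
      (2 / (ρ * Real.sqrt (4 - δ ^ 2 * ρ ^ 2))) * Real.exp (-(δ * ρ ^ 2 * t) / 2) *
        Real.sin (t * ρ * Real.sqrt (4 - δ ^ 2 * ρ ^ 2) / 2)) :
    (∫ t in Set.Ioi (0 : ℝ), (m t) ^ 2) = 1 / (2 * δ * ρ ^ 4) := by
  rcases lt_or_gt_of_ne hne with h | h
  · -- ρ < 2/δ, oscillatory case
    have hδρ : δ * ρ < 2 := by
      have := (lt_div_iff₀ hδ).mp h; linarith
    have h4 : 0 < 4 - δ^2*ρ^2 := by nlinarith [mul_pos hδ hρ]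
    set s := Real.sqrt (4 - δ^2*ρ^2) with hs
    have hs2 : s^2 = 4 - δ^2*ρ^2 := Real.sq_sqrt h4.le
    have hspos : 0 < s := Real.sqrt_pos.mpr h4
    have hmeq : ∀ t, m t = (2/(ρ*s)) * Real.exp ((-(δ*ρ^2))*t/2) * Real.sin ((ρ*s)*t/2) := by
      intro t; rw [hm₂ h]; ring_nf
    simp only [hmeq]
    rw [aux_case2 (-(δ*ρ^2)) (ρ*s) (2/(ρ*s)) (neg_neg_iff_pos.mpr (by positivity)) (by positivity)]
    have hq2 : (ρ*s)^2 = ρ^2*(4-δ^2*ρ^2) := by rw [mul_pow, hs2]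
    have hden : 0 < (-(δ*ρ^2))^2 + (ρ*s)^2 := by positivity
    field_simp
    nlinarith [hq2, sq_nonneg ρ, sq_nonneg s]
  · -- ρ > 2/δ, overdamped case
    have hδρ : 2 < δ * ρ := by
      have := (div_lt_iff₀ hδ).mp h; linarith
    have h4 : 0 < δ^2*ρ^2 - 4 := by nlinarith [mul_pos hδ hρ]
    set s := Real.sqrt (δ^2*ρ^2 - 4) with hs
    have hs2 : s^2 = δ^2*ρ^2 - 4 := Real.sq_sqrt h4.le
    have hspos : 0 < s := Real.sqrt_pos.mpr h4
    have hsδρ : s < δ*ρ := by nlinarith [hs2, hspos, mul_pos hδ hρ]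
    have hα : (-(δ*ρ^2) + ρ*s)/2 < 0 := by nlinarith [mul_lt_mul_of_pos_left hsδρ hρ]
    have hβ : (-(δ*ρ^2) - ρ*s)/2 < 0 := by nlinarith [mul_pos hρ hspos, mul_pos hδ (mul_pos hρ hρ)]
    have hmeq : ∀ t, m t = (1/(ρ*s)) * (Real.exp (((-(δ*ρ^2) + ρ*s)/2)*t)
        - Real.exp (((-(δ*ρ^2) - ρ*s)/2)*t)) := by
      intro t; rw [hm₁ h]; ring_nf
    simp only [hmeq]
    rw [aux_case1 _ _ _ hα hβ]
    have hAB : (-(δ*ρ^2) + ρ*s) * (-(δ*ρ^2) - ρ*s) = 4*ρ^2 := by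
      linear_combination (-(ρ^2)) * hs2
    have hA : -(δ*ρ^2) + ρ*s ≠ 0 := by nlinarith
    have hB : -(δ*ρ^2) - ρ*s ≠ 0 := by nlinarith
    have hA' : -(ρ*δ) + s ≠ 0 := by nlinarith
    have hB' : -(ρ*δ) - s ≠ 0 := by nlinarith
    field_simp
    linear_combination (-2*ρ*δ*s^2) * hs2
end

section
/- Let γ > 0 and ρ > 0 with ρ ≠ γ/2, and let m(t,ρ) = (1/√(γ² − 4ρ²))·(e^{(−γ + √(γ² − 4ρ²))t/2} − e^{(−γ − √(γ² − 4ρ²))t/2}) if 0 < ρ < γ/2, and m(t,ρ) = (2/√(4ρ² − γ²))·e^{−γt/2}·sin(t√(4ρ² − γ²)/2) if ρ > γ/2. Then ∫₀^∞ m(t,ρ)² dt = 1/(2γρ²). -/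
open MeasureTheory Real Filter

lemma int_exp_decay {b : ℝ} (hb : 0 < b) :
    ∫ t in Set.Ioi (0 : ℝ), Real.exp (-(b * t)) = 1 / b := by
  have hderiv : ∀ x ∈ Set.Ioi (0:ℝ),
      HasDerivAt (fun t => -(1/b) * Real.exp (-(b*t))) (Real.exp (-(b*x))) x := by
    intro x _
    have h1 : HasDerivAt (fun t : ℝ => -(b*t)) (-b) x := by
      simpa using ((hasDerivAt_id x).const_mul (-b))
    have := (h1.exp).const_mul (-(1/b))
    refine this.congr_deriv ?_
    field_simp
  have hint : IntegrableOn (fun t => Real.exp (-(b*t))) (Set.Ioi (0:ℝ)) := by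
    simpa [neg_mul] using exp_neg_integrableOn_Ioi 0 hb
  have htend : Tendsto (fun t => -(1/b) * Real.exp (-(b*t))) atTop (nhds 0) := by
    have hbot : Tendsto (fun t : ℝ => -(b * t)) atTop atBot := by
      apply tendsto_atTop_atBot.mpr
      intro c
      refine ⟨max 1 (-c/b), fun x hx => ?_⟩
      have h2 : -c/b ≤ x := le_trans (le_max_right _ _) hx
      have : -c ≤ b * x := by
        have := mul_le_mul_of_nonneg_left h2 hb.le
        calc -c = b * (-c/b) := by field_simp
        _ ≤ b * x := this
      linarith
    have : Tendsto (fun t : ℝ => Real.exp (-(b*t))) atTop (nhds 0) :=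
      Real.tendsto_exp_comp_nhds_zero.mpr hbot
    simpa using this.const_mul (-(1/b))
  have := integral_Ioi_of_hasDerivAt_of_tendsto
    (f := fun t => -(1/b) * Real.exp (-(b*t))) (f' := fun t => Real.exp (-(b*t)))
    (Continuous.continuousWithinAt (by fun_prop)) hderiv hint htend
  simp at this
  rw [this]; ring

lemma int_exp_cos {b : ℝ} (c : ℝ) (hb : 0 < b) :
    ∫ t in Set.Ioi (0 : ℝ), Real.exp (-(b * t)) * Real.cos (c * t) = b / (b ^ 2 + c ^ 2) := by
  have hK : (0:ℝ) < b ^ 2 + c ^ 2 := by positivity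
  set F : ℝ → ℝ := fun t => Real.exp (-(b*t)) * (c * Real.sin (c*t) - b * Real.cos (c*t)) / (b^2+c^2) with hF
  have hderiv : ∀ x ∈ Set.Ioi (0:ℝ),
      HasDerivAt F (Real.exp (-(b*x)) * Real.cos (c*x)) x := by
    intro x _
    have h1 : HasDerivAt (fun t : ℝ => Real.exp (-(b*t))) (-b * Real.exp (-(b*x))) x := by
      have h0 : HasDerivAt (fun t : ℝ => -(b*t)) (-b) x := by
        simpa using ((hasDerivAt_id x).const_mul (-b))
      simpa [mul_comm] using h0.exp
    have hsin : HasDerivAt (fun t : ℝ => Real.sin (c*t)) (Real.cos (c*x) * c) x := by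
      have h0 : HasDerivAt (fun t : ℝ => c*t) c x := by
        simpa using ((hasDerivAt_id x).const_mul c)
      exact h0.sin
    have hcos : HasDerivAt (fun t : ℝ => Real.cos (c*t)) (-Real.sin (c*x) * c) x := by
      have h0 : HasDerivAt (fun t : ℝ => c*t) c x := by
        simpa using ((hasDerivAt_id x).const_mul c)
      exact h0.cos
    have h2 : HasDerivAt (fun t : ℝ => c * Real.sin (c*t) - b * Real.cos (c*t))
        (c * (Real.cos (c*x) * c) - b * (-Real.sin (c*x) * c)) x :=
      (hsin.const_mul c).sub (hcos.const_mul b)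
    have := (h1.mul h2).div_const (b^2+c^2)
    refine this.congr_deriv ?_
    field_simp
    ring
  have hint : IntegrableOn (fun t => Real.exp (-(b*t)) * Real.cos (c*t)) (Set.Ioi (0:ℝ)) := by
    have hbase : IntegrableOn (fun t => Real.exp (-(b*t))) (Set.Ioi (0:ℝ)) := by
      simpa [neg_mul] using exp_neg_integrableOn_Ioi 0 hb
    refine hbase.mono' (Continuous.aestronglyMeasurable (by fun_prop)) ?_
    filter_upwards with t
    rw [norm_mul, Real.norm_eq_abs, Real.norm_eq_abs, abs_of_pos (Real.exp_pos _)]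
    calc Real.exp (-(b*t)) * |Real.cos (c*t)| ≤ Real.exp (-(b*t)) * 1 := by
          gcongr; exact Real.abs_cos_le_one _
      _ = Real.exp (-(b*t)) := mul_one _
  have htend : Tendsto F atTop (nhds 0) := by
    refine squeeze_zero_norm (a := fun t => Real.exp (-(b*t)) * (|c| + b) / (b^2+c^2)) ?_ ?_
    · intro t
      rw [hF]
      simp only [norm_div, norm_mul, Real.norm_eq_abs, abs_of_pos (Real.exp_pos _),
        abs_of_pos hK]
      gcongr
      calc |c * Real.sin (c*t) - b * Real.cos (c*t)|
          ≤ |c * Real.sin (c*t)| + |b * Real.cos (c*t)| := abs_sub _ _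
        _ ≤ |c| * 1 + |b| * 1 := by
            rw [abs_mul, abs_mul]
            gcongr
            · exact Real.abs_sin_le_one _
            · exact Real.abs_cos_le_one _
        _ = |c| + b := by rw [abs_of_pos hb]; ring
    · have hbot : Tendsto (fun t : ℝ => -(b * t)) atTop atBot := by
        apply tendsto_atTop_atBot.mpr
        intro d
        refine ⟨max 1 (-d/b), fun x hx => ?_⟩
        have h2 : -d/b ≤ x := le_trans (le_max_right _ _) hx
        have : -d ≤ b * x := by
          have := mul_le_mul_of_nonneg_left h2 hb.le
          calc -d = b * (-d/b) := by field_simp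
          _ ≤ b * x := this
        linarith
      have h0 : Tendsto (fun t : ℝ => Real.exp (-(b*t))) atTop (nhds 0) :=
        Real.tendsto_exp_comp_nhds_zero.mpr hbot
      have := (h0.mul_const ((|c| + b))).div_const (b^2+c^2)
      simpa using this
  have := integral_Ioi_of_hasDerivAt_of_tendsto
    (f := F) (f' := fun t => Real.exp (-(b*t)) * Real.cos (c*t))
    (Continuous.continuousWithinAt (by rw [hF]; fun_prop)) hderiv hint htend
  rw [this, hF]
  simp
  field_simp

/-- For `γ > 0` and `ρ > 0` with `ρ ≠ γ/2`, the weakly damped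
wave multiplier `t ↦ m(t,ρ)` satisfies `∫₀^∞ m(t,ρ)² dt = 1/(2γρ²)`. -/
theorem integral_sq_weakly_damped_multiplier
    (γ ρ : ℝ) (hγ : 0 < γ) (hρ : 0 < ρ) (hne : ρ ≠ γ / 2)
    (m : ℝ → ℝ)
    (hm₁ : ρ < γ / 2 → m = fun t =>
      (1 / Real.sqrt (γ ^ 2 - 4 * ρ ^ 2)) *
        (Real.exp ((-γ + Real.sqrt (γ ^ 2 - 4 * ρ ^ 2)) * t / 2) -
          Real.exp ((-γ - Real.sqrt (γ ^ 2 - 4 * ρ ^ 2)) * t / 2)))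
    (hm₂ : γ / 2 < ρ → m = fun t =>
      (2 / Real.sqrt (4 * ρ ^ 2 - γ ^ 2)) * Real.exp (-(γ * t) / 2) *
        Real.sin (t * Real.sqrt (4 * ρ ^ 2 - γ ^ 2) / 2)) :
    (∫ t in Set.Ioi (0 : ℝ), (m t) ^ 2) = 1 / (2 * γ * ρ ^ 2) := by
  rcases lt_or_gt_of_ne hne with hlt | hgt
  · -- overdamped case
    set s := Real.sqrt (γ ^ 2 - 4 * ρ ^ 2) with hs_def
    have hD : 0 < γ ^ 2 - 4 * ρ ^ 2 := by nlinarith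
    have hs2 : s ^ 2 = γ ^ 2 - 4 * ρ ^ 2 := Real.sq_sqrt hD.le
    have hspos : 0 < s := Real.sqrt_pos.mpr hD
    have hslt : s < γ := by nlinarith
    have key : ∀ t : ℝ, m t ^ 2 =
        (1/(γ^2-4*ρ^2)) * Real.exp (-((γ-s)*t))
        - (2/(γ^2-4*ρ^2)) * Real.exp (-(γ*t))
        + (1/(γ^2-4*ρ^2)) * Real.exp (-((γ+s)*t)) := by
      intro t
      rw [hm₁ hlt]
      simp only
      have e1 : Real.exp ((-γ + s) * t / 2) * Real.exp ((-γ + s) * t / 2)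
          = Real.exp (-((γ - s) * t)) := by rw [← Real.exp_add]; congr 1; ring
      have e2 : Real.exp ((-γ + s) * t / 2) * Real.exp ((-γ - s) * t / 2)
          = Real.exp (-(γ * t)) := by rw [← Real.exp_add]; congr 1; ring
      have e3 : Real.exp ((-γ - s) * t / 2) * Real.exp ((-γ - s) * t / 2)
          = Real.exp (-((γ + s) * t)) := by rw [← Real.exp_add]; congr 1; ring
      have expand : ((1/s) * (Real.exp ((-γ + s) * t / 2) - Real.exp ((-γ - s) * t / 2))) ^ 2
          = (1/s^2) * (Real.exp ((-γ + s) * t / 2) * Real.exp ((-γ + s) * t / 2))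
            - (2/s^2) * (Real.exp ((-γ + s) * t / 2) * Real.exp ((-γ - s) * t / 2))
            + (1/s^2) * (Real.exp ((-γ - s) * t / 2) * Real.exp ((-γ - s) * t / 2)) := by
        ring
      rw [expand, e1, e2, e3, hs2]
    have i1 : IntegrableOn (fun t => (1/(γ^2-4*ρ^2)) * Real.exp (-((γ-s)*t))) (Set.Ioi (0:ℝ)) := by
      have := (exp_neg_integrableOn_Ioi 0 (by linarith : (0:ℝ) < γ - s)).const_mul (1/(γ^2-4*ρ^2))
      simpa only [neg_mul, IntegrableOn] using this
    have i2 : IntegrableOn (fun t => (2/(γ^2-4*ρ^2)) * Real.exp (-(γ*t))) (Set.Ioi (0:ℝ)) := by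
      have := (exp_neg_integrableOn_Ioi 0 hγ).const_mul (2/(γ^2-4*ρ^2))
      simpa only [neg_mul, IntegrableOn] using this
    have i3 : IntegrableOn (fun t => (1/(γ^2-4*ρ^2)) * Real.exp (-((γ+s)*t))) (Set.Ioi (0:ℝ)) := by
      have := (exp_neg_integrableOn_Ioi 0 (by linarith : (0:ℝ) < γ + s)).const_mul (1/(γ^2-4*ρ^2))
      simpa only [neg_mul, IntegrableOn] using this
    have i12 : IntegrableOn (fun t => (1/(γ^2-4*ρ^2)) * Real.exp (-((γ-s)*t))
        - (2/(γ^2-4*ρ^2)) * Real.exp (-(γ*t))) (Set.Ioi (0:ℝ)) := i1.sub i2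
    simp only [key]
    rw [integral_add i12 i3, integral_sub i1 i2,
      integral_const_mul, integral_const_mul, integral_const_mul,
      int_exp_decay (by linarith : (0:ℝ) < γ - s), int_exp_decay hγ,
      int_exp_decay (by linarith : (0:ℝ) < γ + s)]
    have h1 : γ - s ≠ 0 := ne_of_gt (by linarith)
    have h2 : γ + s ≠ 0 := ne_of_gt (by linarith)
    have h3 : γ ^ 2 - 4 * ρ ^ 2 ≠ 0 := ne_of_gt hD
    have hprod : (γ - s) * (γ + s) = 4 * ρ ^ 2 := by nlinarith [hs2]
    rw [← hs2]
    field_simp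
    linear_combination s^2 * hs2
  · -- underdamped case
    set w := Real.sqrt (4 * ρ ^ 2 - γ ^ 2) with hw_def
    have hD : 0 < 4 * ρ ^ 2 - γ ^ 2 := by nlinarith
    have hw2 : w ^ 2 = 4 * ρ ^ 2 - γ ^ 2 := Real.sq_sqrt hD.le
    have hwpos : 0 < w := Real.sqrt_pos.mpr hD
    have key : ∀ t : ℝ, m t ^ 2 =
        (2/(4*ρ^2-γ^2)) * Real.exp (-(γ*t))
        - (2/(4*ρ^2-γ^2)) * (Real.exp (-(γ*t)) * Real.cos (w*t)) := by
      intro t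
      rw [hm₂ hgt]
      simp only
      have esq : Real.exp (-(γ*t)/2) * Real.exp (-(γ*t)/2) = Real.exp (-(γ*t)) := by
        rw [← Real.exp_add]; congr 1; ring
      have hsin : Real.sin (t * w / 2) ^ 2 = 1/2 - Real.cos (w * t) / 2 := by
        have h := Real.cos_two_mul (w*t/2)
        rw [show 2*(w*t/2) = w*t by ring] at h
        have h2 := Real.sin_sq_add_cos_sq (w*t/2)
        rw [show t * w / 2 = w * t / 2 by ring]
        linarith
      have expand : ((2/w) * Real.exp (-(γ*t)/2) * Real.sin (t * w / 2)) ^ 2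
          = (4/w^2) * (Real.exp (-(γ*t)/2) * Real.exp (-(γ*t)/2)) * Real.sin (t * w / 2) ^ 2 := by
        ring
      rw [expand, esq, hsin, hw2]
      ring
    have i1 : IntegrableOn (fun t => (2/(4*ρ^2-γ^2)) * Real.exp (-(γ*t))) (Set.Ioi (0:ℝ)) := by
      have := (exp_neg_integrableOn_Ioi 0 hγ).const_mul (2/(4*ρ^2-γ^2))
      simpa only [neg_mul, IntegrableOn] using this
    have i2 : IntegrableOn (fun t => (2/(4*ρ^2-γ^2)) * (Real.exp (-(γ*t)) * Real.cos (w*t)))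
        (Set.Ioi (0:ℝ)) := by
      have hbase : IntegrableOn (fun t => Real.exp (-(γ*t))) (Set.Ioi (0:ℝ)) := by
        simpa [neg_mul] using exp_neg_integrableOn_Ioi 0 hγ
      have hb : IntegrableOn (fun t => Real.exp (-(γ*t)) * Real.cos (w*t)) (Set.Ioi (0:ℝ)) := by
        refine hbase.mono' (Continuous.aestronglyMeasurable (by fun_prop)) ?_
        filter_upwards with t
        rw [norm_mul, Real.norm_eq_abs, Real.norm_eq_abs, abs_of_pos (Real.exp_pos _)]
        calc Real.exp (-(γ*t)) * |Real.cos (w*t)| ≤ Real.exp (-(γ*t)) * 1 := by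
              gcongr; exact Real.abs_cos_le_one _
          _ = Real.exp (-(γ*t)) := mul_one _
      exact hb.const_mul _
    simp only [key]
    rw [integral_sub i1 i2, integral_const_mul, integral_const_mul,
      int_exp_decay hγ, int_exp_cos w hγ]
    rw [hw2]
    have h3 : 4 * ρ ^ 2 - γ ^ 2 ≠ 0 := ne_of_gt hD
    field_simp
    ring
end

section
/- Let n ≥ 2, l ∈ ℕ, δ > 0, and −(n−5)/2 < α < 2. Let m(t,ρ) be the strongly damped wave multiplier: m(t,ρ) = (1/(ρ√(δ²ρ² − 4)))·(e^{(−δρ² + ρ√(δ²ρ² − 4))t/2} − e^{(−δρ² − ρ√(δ²ρ² − 4))t/2}) if ρ > 2/δ, and m(t,ρ) = (2/(ρ√(4 − δ²ρ²)))·e^{−δρ²t/2}·sin(tρ√(4 − δ²ρ²)/2) if 0 < ρ < 2/δ. Suppose J : (0,∞) → ℝ is a measurable function for which there is a constant C > 0 with |J(ρ)| ≤ C·ρ^{l+(n−2)/2} for 0 < ρ < 1 and |J(ρ)| ≤ C·ρ^{−1/2} for ρ ≥ 1. Then, with K(t,ρ) = m(t,ρ)·ρ^α·J(ρ), one has ∫₀^∞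 ∫₀^∞ |K(t,ρ)|² dt dρ < ∞. -/
open MeasureTheory Set

lemma aux_exp_lintegral {c : ℝ} (hc : 0 < c) :
    ∫⁻ t in Set.Ioi (0:ℝ), ENNReal.ofReal (Real.exp (-(c*t))) = ENNReal.ofReal (1/c) := by
  have hint : IntegrableOn (fun t : ℝ => Real.exp (-(c*t))) (Set.Ioi 0) := by
    simpa [neg_mul] using exp_neg_integrableOn_Ioi 0 hc
  rw [← ofReal_integral_eq_lintegral_ofReal hint
      (Filter.Eventually.of_forall fun t => (Real.exp_pos _).le)]
  congr 1
  have := integral_comp_mul_left_Ioi (fun x => Real.exp (-x)) 0 hc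
  simp only [mul_zero, integral_exp_neg_Ioi, neg_zero, Real.exp_zero, smul_eq_mul, mul_one] at this
  rw [this, one_div]

lemma aux_sq_exp {c : ℝ} (t : ℝ) (hc : 0 < c) (ht : 0 ≤ t) :
    t^2 * Real.exp (-(c*t)) ≤ (16/c^2) * Real.exp (-(c/2*t)) := by
  have e1 : Real.exp (c/2*t) * Real.exp (-(c/2*t)) = 1 := by
    rw [← Real.exp_add]; simp
  have e2 : (c*t/4)^2 ≤ Real.exp (c/2*t) := by
    have h1 := Real.add_one_le_exp (c*t/4)
    have h0 : Real.exp (c*t/4) * Real.exp (c*t/4) = Real.exp (c/2*t) := by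
      rw [← Real.exp_add]; ring_nf
    nlinarith [Real.exp_pos (c*t/4), mul_nonneg hc.le ht]
  have e3 : t^2 ≤ 16/c^2 * Real.exp (c/2*t) := by
    rw [div_mul_eq_mul_div, le_div_iff₀ (by positivity)]
    nlinarith [e2]
  have key : t^2 * Real.exp (-(c/2*t)) ≤ 16/c^2 :=
    calc t^2 * Real.exp (-(c/2*t)) ≤ (16/c^2 * Real.exp (c/2*t)) * Real.exp (-(c/2*t)) :=
          mul_le_mul_of_nonneg_right e3 (Real.exp_pos _).le
      _ = 16/c^2 := by rw [mul_assoc, e1, mul_one]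
  have h2 : Real.exp (-(c*t)) = Real.exp (-(c/2*t)) * Real.exp (-(c/2*t)) := by
    rw [← Real.exp_add]; ring_nf
  calc t^2 * Real.exp (-(c*t)) = (t^2 * Real.exp (-(c/2*t))) * Real.exp (-(c/2*t)) := by
        rw [h2]; ring
    _ ≤ 16/c^2 * Real.exp (-(c/2*t)) :=
        mul_le_mul_of_nonneg_right key (Real.exp_pos _).le

lemma aux_lint_bound (f : ℝ → ℝ) (c0 A c : ℝ) (hc0 : 0 ≤ c0) (hA : 0 ≤ A) (hc : 0 < c)
    (hf : ∀ t ∈ Set.Ioi (0:ℝ), f t ≤ c0 * (A * Real.exp (-(c*t)))) :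
    ∫⁻ t in Set.Ioi (0:ℝ), ENNReal.ofReal (f t) ≤ ENNReal.ofReal (c0 * A * (1/c)) := by
  have hmono : ∫⁻ t in Set.Ioi (0:ℝ), ENNReal.ofReal (f t)
      ≤ ∫⁻ t in Set.Ioi (0:ℝ), ENNReal.ofReal (c0*A) * ENNReal.ofReal (Real.exp (-(c*t))) := by
    refine setLIntegral_mono' measurableSet_Ioi fun t ht => ?_
    rw [← ENNReal.ofReal_mul (by positivity)]
    exact ENNReal.ofReal_le_ofReal (by rw [mul_assoc]; exact hf t ht)
  calc ∫⁻ t in Set.Ioi (0:ℝ), ENNReal.ofReal (f t)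
      ≤ ∫⁻ t in Set.Ioi (0:ℝ), ENNReal.ofReal (c0*A) * ENNReal.ofReal (Real.exp (-(c*t))) := hmono
    _ = ENNReal.ofReal (c0*A) * ∫⁻ t in Set.Ioi (0:ℝ), ENNReal.ofReal (Real.exp (-(c*t))) :=
        lintegral_const_mul' _ _ ENNReal.ofReal_ne_top
    _ = ENNReal.ofReal (c0*A) * ENNReal.ofReal (1/c) := by rw [aux_exp_lintegral hc]
    _ = ENNReal.ofReal (c0*A*(1/c)) := by rw [← ENNReal.ofReal_mul (by positivity)]

lemma aux_rpow_sq {x : ℝ} (hx : 0 ≤ x) (y : ℝ) : (x ^ y)^2 = x ^ (2*y) := by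
  rw [← Real.rpow_natCast (x^y) 2, ← Real.rpow_mul hx]
  norm_num [mul_comm]

lemma aux_key {δ ρ : ℝ} (hδ : 0 < δ) (hρ : 0 < ρ) (h2 : 2 < δ*ρ) :
    -(δ*ρ^2) + ρ*Real.sqrt (δ^2*ρ^2-4) ≤ -(2/δ) := by
  have hδρ0 : 0 < δ*ρ := by positivity
  have hc : δ*ρ*(2/(δ*ρ)) = 2 := by field_simp
  have hsq : δ^2*ρ^2 - 4 ≤ (δ*ρ - 2/(δ*ρ))^2 := by
    nlinarith [sq_nonneg (2/(δ*ρ))]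
  have hnn : 0 ≤ δ*ρ - 2/(δ*ρ) := by
    rw [sub_nonneg, div_le_iff₀ hδρ0]; nlinarith
  have h3 : Real.sqrt (δ^2*ρ^2-4) ≤ δ*ρ - 2/(δ*ρ) :=
    calc Real.sqrt (δ^2*ρ^2-4) ≤ Real.sqrt ((δ*ρ - 2/(δ*ρ))^2) := Real.sqrt_le_sqrt hsq
      _ = δ*ρ - 2/(δ*ρ) := Real.sqrt_sq hnn
  have h4 : ρ*Real.sqrt (δ^2*ρ^2-4) ≤ δ*ρ^2 - 2/δ := by
    calc ρ*Real.sqrt (δ^2*ρ^2-4) ≤ ρ*(δ*ρ - 2/(δ*ρ)) :=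
          mul_le_mul_of_nonneg_left h3 hρ.le
      _ = δ*ρ^2 - 2/δ := by field_simp
  linarith

set_option maxHeartbeats 1600000 in
/-- Lemma 4.1 of the paper, strongly damped case. For `n ≥ 2`,
`l ∈ ℕ`, `δ > 0` and `-(n-5)/2 < α < 2`, the kernel
`K(t,ρ) = m(t,ρ) ρ^α J(ρ)` is square integrable on `(0,∞) × (0,∞)`, where `m` is
the strongly damped wave multiplier and `J` is any measurable function
satisfying the Bessel-type bounds `|J(ρ)| ≤ C ρ^{l+(n-2)/2}` for `0 < ρ < 1` and
`|J(ρ)| ≤ C ρ^{-1/2}` for `ρ ≥ 1`. -/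
theorem kernel_square_integrable_strong
    (n : ℕ) (hn : 2 ≤ n) (l : ℕ) (δ α : ℝ) (hδ : 0 < δ)
    (hα₁ : -(((n : ℝ) - 5) / 2) < α) (hα₂ : α < 2)
    (m : ℝ → ℝ → ℝ)
    (hm₁ : ∀ t ρ : ℝ, 2 / δ < ρ → m t ρ =
      (1 / (ρ * Real.sqrt (δ ^ 2 * ρ ^ 2 - 4))) *
        (Real.exp ((-(δ * ρ ^ 2) + ρ * Real.sqrt (δ ^ 2 * ρ ^ 2 - 4)) * t / 2) -
          Real.exp ((-(δ * ρ ^ 2) - ρ * Real.sqrt (δ ^ 2 * ρ ^ 2 - 4)) * t / 2)))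
    (hm₂ : ∀ t ρ : ℝ, 0 < ρ → ρ < 2 / δ → m t ρ =
      (2 / (ρ * Real.sqrt (4 - δ ^ 2 * ρ ^ 2))) * Real.exp (-(δ * ρ ^ 2 * t) / 2) *
        Real.sin (t * ρ * Real.sqrt (4 - δ ^ 2 * ρ ^ 2) / 2))
    (J : ℝ → ℝ) (hJmeas : Measurable J) (C : ℝ) (hC : 0 < C)
    (hJ₁ : ∀ ρ : ℝ, 0 < ρ → ρ < 1 → |J ρ| ≤ C * ρ ^ ((l : ℝ) + ((n : ℝ) - 2) / 2))
    (hJ₂ : ∀ ρ : ℝ, 1 ≤ ρ → |J ρ| ≤ C * ρ ^ (-(1 : ℝ) / 2))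
    (K : ℝ → ℝ → ℝ) (hK : ∀ t ρ : ℝ, K t ρ = m t ρ * ρ ^ α * J ρ) :
    (∫⁻ ρ in Set.Ioi (0 : ℝ), ∫⁻ t in Set.Ioi (0 : ℝ),
        ENNReal.ofReal ((K t ρ) ^ 2)) < ⊤ := by
  have hKsq : ∀ t ρ : ℝ, K t ρ^2 = m t ρ^2 * (ρ^α*J ρ)^2 := fun t ρ => by rw [hK]; ring
  set a : ℝ := min 1 (1/δ) with ha_def
  set b : ℝ := max 1 (4/δ) with hb_def
  have ha0 : 0 < a := lt_min one_pos (by positivity)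
  have ha1 : a ≤ 1 := min_le_left _ _
  have haδ : a ≤ 1/δ := min_le_right _ _
  have hb1 : (1:ℝ) ≤ b := le_max_left _ _
  have hbδ : 4/δ ≤ b := le_max_right _ _
  have hb0 : (0:ℝ) < b := lt_of_lt_of_le one_pos hb1
  have hab : a ≤ b := ha1.trans hb1
  -- Region 1 : ρ ∈ Ioo 0 a
  have hR1 : ∀ ρ ∈ Set.Ioo (0:ℝ) a,
      (∫⁻ t in Set.Ioi (0:ℝ), ENNReal.ofReal (K t ρ^2))
        ≤ ENNReal.ofReal ((2*C^2/δ) * ρ^(2*α + (2*(l:ℝ)+(n:ℝ)-6))) := by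
    rintro ρ ⟨hρ0, hρa⟩
    have hρ1 : ρ < 1 := lt_of_lt_of_le hρa ha1
    have hρδ : ρ < 1/δ := lt_of_lt_of_le hρa haδ
    have hδρ1 : ρ*δ < 1 := (lt_div_iff₀ hδ).1 hρδ
    have hρ2δ : ρ < 2/δ := by rw [lt_div_iff₀ hδ]; nlinarith
    have hprod : 0 ≤ ρ*δ*(1 - ρ*δ) :=
      mul_nonneg (mul_pos hρ0 hδ).le (by linarith)
    have hu3 : (3:ℝ) ≤ 4 - δ^2*ρ^2 := by nlinarith
    have hu0 : (0:ℝ) < 4 - δ^2*ρ^2 := by linarith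
    set s : ℝ := Real.sqrt (4 - δ^2*ρ^2) with hs_def
    have hs2 : s^2 = 4 - δ^2*ρ^2 := Real.sq_sqrt hu0.le
    have hs0 : 0 < s := Real.sqrt_pos.2 hu0
    have hA : (0:ℝ) ≤ 4/(ρ^2*(4-δ^2*ρ^2)) :=
      div_nonneg (by norm_num) (mul_nonneg (sq_nonneg ρ) hu0.le)
    have hpoint : ∀ t ∈ Set.Ioi (0:ℝ), K t ρ^2 ≤
        (ρ^α*J ρ)^2 * ((4/(ρ^2*(4-δ^2*ρ^2))) * Real.exp (-(δ*ρ^2*t))) := by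
      intro t ht
      have hm := hm₂ t ρ hρ0 hρ2δ
      have hE : (Real.exp (-(δ*ρ^2*t)/2))^2 = Real.exp (-(δ*ρ^2*t)) := by
        rw [sq, ← Real.exp_add]; ring_nf
      have hmsq : m t ρ^2 ≤ (4/(ρ^2*(4-δ^2*ρ^2))) * Real.exp (-(δ*ρ^2*t)) := by
        rw [hm]
        have hcoef : (2/(ρ*s))^2 = 4/(ρ^2*(4-δ^2*ρ^2)) := by
          rw [div_pow, mul_pow, hs2]; norm_num
        calc ((2/(ρ*s)) * Real.exp (-(δ*ρ^2*t)/2) * Real.sin (t*ρ*s/2))^2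
            = (2/(ρ*s))^2 * (Real.exp (-(δ*ρ^2*t)/2))^2 * Real.sin (t*ρ*s/2)^2 := by ring
          _ ≤ (2/(ρ*s))^2 * (Real.exp (-(δ*ρ^2*t)/2))^2 * 1 := by
              have := Real.sin_sq_le_one (t*ρ*s/2)
              exact mul_le_mul_of_nonneg_left this (by positivity)
          _ = (4/(ρ^2*(4-δ^2*ρ^2))) * Real.exp (-(δ*ρ^2*t)) := by
              rw [mul_one, hE, hcoef]
      calc K t ρ^2 = m t ρ^2 * (ρ^α*J ρ)^2 := hKsq t ρ
        _ ≤ ((4/(ρ^2*(4-δ^2*ρ^2))) * Real.exp (-(δ*ρ^2*t))) * (ρ^α*J ρ)^2 :=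
            mul_le_mul_of_nonneg_right hmsq (sq_nonneg _)
        _ = (ρ^α*J ρ)^2 * ((4/(ρ^2*(4-δ^2*ρ^2))) * Real.exp (-(δ*ρ^2*t))) := by ring
    have hbound := aux_lint_bound (fun t => K t ρ^2) ((ρ^α*J ρ)^2)
      (4/(ρ^2*(4-δ^2*ρ^2))) (δ*ρ^2) (sq_nonneg _) hA (by positivity) hpoint
    refine hbound.trans (ENNReal.ofReal_le_ofReal ?_)
    -- numeric bound
    have hJsq : J ρ^2 ≤ C^2 * ρ^(2*((l:ℝ) + ((n:ℝ)-2)/2)) := by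
      calc J ρ^2 = |J ρ|^2 := (sq_abs _).symm
        _ ≤ (C*ρ^((l:ℝ) + ((n:ℝ)-2)/2))^2 := by
            apply pow_le_pow_left₀ (abs_nonneg _) (hJ₁ ρ hρ0 hρ1)
        _ = C^2 * ρ^(2*((l:ℝ) + ((n:ℝ)-2)/2)) := by
            rw [mul_pow, aux_rpow_sq hρ0.le]
    have hcJ : (ρ^α*J ρ)^2 ≤ ρ^(2*α) * (C^2 * ρ^(2*((l:ℝ) + ((n:ℝ)-2)/2))) := by
      rw [mul_pow, aux_rpow_sq hρ0.le]
      exact mul_le_mul_of_nonneg_left hJsq (Real.rpow_nonneg hρ0.le _)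
    have hsum : ρ^(2*α) * ρ^(2*((l:ℝ) + ((n:ℝ)-2)/2))
        = ρ^(2*α + (2*(l:ℝ)+(n:ℝ)-6)) * (ρ^2*ρ^2) := by
      have h4 : (ρ^2*ρ^2 : ℝ) = ρ^((4:ℝ)) := by
        rw [← Real.rpow_natCast ρ 2, ← Real.rpow_add hρ0]; norm_num
      rw [h4, ← Real.rpow_add hρ0, ← Real.rpow_add hρ0]; congr 1; ring
    have hAc : (4/(ρ^2*(4-δ^2*ρ^2))) * (1/(δ*ρ^2)) ≤ 2/(δ*(ρ^2*ρ^2)) := by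
      rw [div_mul_div_comm, mul_one, div_le_div_iff₀ (by positivity) (by positivity)]
      nlinarith [mul_pos (mul_pos (pow_pos hρ0 2) (pow_pos hρ0 2)) hδ]
    have hne : (ρ:ℝ)^2*ρ^2 ≠ 0 := by positivity
    calc (ρ^α*J ρ)^2 * (4/(ρ^2*(4-δ^2*ρ^2))) * (1/(δ*ρ^2))
        = (ρ^α*J ρ)^2 * ((4/(ρ^2*(4-δ^2*ρ^2))) * (1/(δ*ρ^2))) := by ring
      _ ≤ (ρ^(2*α) * (C^2 * ρ^(2*((l:ℝ) + ((n:ℝ)-2)/2)))) * (2/(δ*(ρ^2*ρ^2))) := by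
          apply mul_le_mul hcJ hAc (by positivity) (by positivity)
      _ = (2*C^2/δ) * ((ρ^(2*α) * ρ^(2*((l:ℝ) + ((n:ℝ)-2)/2)))/(ρ^2*ρ^2)) := by
          field_simp
      _ = (2*C^2/δ) * ρ^(2*α + (2*(l:ℝ)+(n:ℝ)-6)) := by
          rw [hsum, mul_div_assoc, mul_div_cancel_right₀ _ hne]
  -- Region 3 : ρ ∈ Ioi b
  have hR3 : ∀ ρ ∈ Set.Ioi b,
      (∫⁻ t in Set.Ioi (0:ℝ), ENNReal.ofReal (K t ρ^2))
        ≤ ENNReal.ofReal ((C^2/δ) * ρ^(2*α - 5)) := by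
    intro ρ hρb
    have hρb' : b < ρ := hρb
    have hρ0 : 0 < ρ := lt_trans hb0 hρb'
    have hρ1 : (1:ℝ) ≤ ρ := le_of_lt (lt_of_le_of_lt hb1 hρb')
    have hδρ4 : 4 < δ*ρ := by
      have : 4/δ < ρ := lt_of_le_of_lt hbδ hρb'
      rw [div_lt_iff₀ hδ] at this; linarith [this]
    have h2δρ : 2/δ < ρ := by rw [div_lt_iff₀ hδ]; nlinarith
    have hD : (0:ℝ) < δ^2*ρ^2 - 4 := by nlinarith
    set s : ℝ := Real.sqrt (δ^2*ρ^2 - 4) with hs_def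
    have hs2 : s^2 = δ^2*ρ^2 - 4 := Real.sq_sqrt hD.le
    have hs0 : 0 < s := Real.sqrt_pos.2 hD
    have hkey : -(δ*ρ^2) + ρ*s ≤ -(2/δ) := aux_key hδ hρ0 (by linarith)
    have hA : (0:ℝ) ≤ 1/(ρ^2*(δ^2*ρ^2-4)) :=
      div_nonneg (by norm_num) (mul_nonneg (sq_nonneg ρ) hD.le)
    have hpoint : ∀ t ∈ Set.Ioi (0:ℝ), K t ρ^2 ≤
        (ρ^α*J ρ)^2 * ((1/(ρ^2*(δ^2*ρ^2-4))) * Real.exp (-((2/δ)*t))) := by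
      intro t ht
      have ht0 : (0:ℝ) < t := ht
      have hm := hm₁ t ρ h2δρ
      have hEle : Real.exp ((-(δ*ρ^2) - ρ*s)*t/2) ≤ Real.exp ((-(δ*ρ^2) + ρ*s)*t/2) := by
        apply Real.exp_le_exp.2
        nlinarith [mul_nonneg (mul_nonneg hρ0.le hs0.le) ht0.le]
      have hdiff0 : 0 ≤ Real.exp ((-(δ*ρ^2) + ρ*s)*t/2) - Real.exp ((-(δ*ρ^2) - ρ*s)*t/2) := by
        linarith
      have hdiffle : Real.exp ((-(δ*ρ^2) + ρ*s)*t/2) - Real.exp ((-(δ*ρ^2) - ρ*s)*t/2)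
          ≤ Real.exp ((-(δ*ρ^2) + ρ*s)*t/2) := by
        linarith [Real.exp_pos ((-(δ*ρ^2) - ρ*s)*t/2)]
      have hE2 : (Real.exp ((-(δ*ρ^2) + ρ*s)*t/2))^2 = Real.exp ((-(δ*ρ^2) + ρ*s)*t) := by
        rw [sq, ← Real.exp_add]; ring_nf
      have hEbound : (Real.exp ((-(δ*ρ^2) + ρ*s)*t/2))^2 ≤ Real.exp (-((2/δ)*t)) := by
        rw [hE2]
        apply Real.exp_le_exp.2
        have := mul_le_mul_of_nonneg_right hkey ht0.le
        linarith
      have hcoef : (1/(ρ*s))^2 = 1/(ρ^2*(δ^2*ρ^2-4)) := by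
        rw [div_pow, mul_pow, hs2]; norm_num
      have hmsq : m t ρ^2 ≤ (1/(ρ^2*(δ^2*ρ^2-4))) * Real.exp (-((2/δ)*t)) := by
        rw [hm]
        calc ((1/(ρ*s)) * (Real.exp ((-(δ*ρ^2) + ρ*s)*t/2) - Real.exp ((-(δ*ρ^2) - ρ*s)*t/2)))^2
            = (1/(ρ*s))^2 * (Real.exp ((-(δ*ρ^2) + ρ*s)*t/2) - Real.exp ((-(δ*ρ^2) - ρ*s)*t/2))^2 := by
              ring
          _ ≤ (1/(ρ*s))^2 * (Real.exp ((-(δ*ρ^2) + ρ*s)*t/2))^2 := by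
              apply mul_le_mul_of_nonneg_left _ (by positivity)
              exact pow_le_pow_left₀ hdiff0 hdiffle 2
          _ ≤ (1/(ρ*s))^2 * Real.exp (-((2/δ)*t)) := by
              apply mul_le_mul_of_nonneg_left hEbound (by positivity)
          _ = (1/(ρ^2*(δ^2*ρ^2-4))) * Real.exp (-((2/δ)*t)) := by rw [hcoef]
      calc K t ρ^2 = m t ρ^2 * (ρ^α*J ρ)^2 := hKsq t ρ
        _ ≤ ((1/(ρ^2*(δ^2*ρ^2-4))) * Real.exp (-((2/δ)*t))) * (ρ^α*J ρ)^2 :=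
            mul_le_mul_of_nonneg_right hmsq (sq_nonneg _)
        _ = (ρ^α*J ρ)^2 * ((1/(ρ^2*(δ^2*ρ^2-4))) * Real.exp (-((2/δ)*t))) := by ring
    have hbound := aux_lint_bound (fun t => K t ρ^2) ((ρ^α*J ρ)^2)
      (1/(ρ^2*(δ^2*ρ^2-4))) (2/δ) (sq_nonneg _) hA (by positivity) hpoint
    refine hbound.trans (ENNReal.ofReal_le_ofReal ?_)
    have hJsq : J ρ^2 ≤ C^2 * ρ^(2*(-(1:ℝ)/2)) := by
      calc J ρ^2 = |J ρ|^2 := (sq_abs _).symm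
        _ ≤ (C*ρ^(-(1:ℝ)/2))^2 := by
            apply pow_le_pow_left₀ (abs_nonneg _) (hJ₂ ρ hρ1)
        _ = C^2 * ρ^(2*(-(1:ℝ)/2)) := by rw [mul_pow, aux_rpow_sq hρ0.le]
    have hcJ : (ρ^α*J ρ)^2 ≤ ρ^(2*α) * (C^2 * ρ^(2*(-(1:ℝ)/2))) := by
      rw [mul_pow, aux_rpow_sq hρ0.le]
      exact mul_le_mul_of_nonneg_left hJsq (Real.rpow_nonneg hρ0.le _)
    have hsum : ρ^(2*α) * ρ^(2*(-(1:ℝ)/2)) = ρ^(2*α - 5) * (ρ^2*ρ^2) := by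
      have h4 : (ρ^2*ρ^2 : ℝ) = ρ^((4:ℝ)) := by
        rw [← Real.rpow_natCast ρ 2, ← Real.rpow_add hρ0]; norm_num
      rw [h4, ← Real.rpow_add hρ0, ← Real.rpow_add hρ0]; congr 1; ring
    have hAc : (1/(ρ^2*(δ^2*ρ^2-4))) * (1/(2/δ)) ≤ 1/(δ*(ρ^2*ρ^2)) := by
      rw [one_div_div, div_mul_div_comm, one_mul,
        div_le_div_iff₀ (by positivity) (by positivity)]
      have h16 : (16:ℝ) ≤ (δ*ρ)^2 := by nlinarith
      nlinarith [mul_nonneg (sq_nonneg ρ) (by linarith : (0:ℝ) ≤ (δ*ρ)^2 - 16)]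
    have hne : (ρ:ℝ)^2*ρ^2 ≠ 0 := by positivity
    calc (ρ^α*J ρ)^2 * (1/(ρ^2*(δ^2*ρ^2-4))) * (1/(2/δ))
        = (ρ^α*J ρ)^2 * ((1/(ρ^2*(δ^2*ρ^2-4))) * (1/(2/δ))) := by ring
      _ ≤ (ρ^(2*α) * (C^2 * ρ^(2*(-(1:ℝ)/2)))) * (1/(δ*(ρ^2*ρ^2))) := by
          apply mul_le_mul hcJ hAc (by positivity) (by positivity)
      _ = (C^2/δ) * ((ρ^(2*α) * ρ^(2*(-(1:ℝ)/2)))/(ρ^2*ρ^2)) := by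
          field_simp
      _ = (C^2/δ) * ρ^(2*α - 5) := by
          rw [hsum, mul_div_assoc, div_self hne, mul_one]
  -- Region 2 : ρ ∈ Icc a b, ρ ≠ 2/δ
  set c₀ : ℝ := min (δ*a^2) (2/δ) with hc₀_def
  have hc₀ : 0 < c₀ := lt_min (by positivity) (by positivity)
  set M₂ : ℝ := ((a^(2*α)+b^(2*α))*C^2) * ((16/c₀^2) * (1/(c₀/2))) with hM₂_def
  have hR2 : ∀ ρ ∈ Set.Icc a b, ρ ≠ 2/δ →
      (∫⁻ t in Set.Ioi (0:ℝ), ENNReal.ofReal (K t ρ^2)) ≤ ENNReal.ofReal M₂ := by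
    rintro ρ ⟨haρ, hρb⟩ hρne
    have hρ0 : 0 < ρ := lt_of_lt_of_le ha0 haρ
    have hc₀ρ : c₀ ≤ δ*ρ^2 := by
      have h1 : δ*a^2 ≤ δ*ρ^2 :=
        mul_le_mul_of_nonneg_left (pow_le_pow_left₀ ha0.le haρ 2) hδ.le
      exact le_trans (min_le_left _ _) h1
    -- the main pointwise bound on m² in both subcases
    have hmsq : ∀ t ∈ Set.Ioi (0:ℝ), m t ρ^2 ≤ t^2 * Real.exp (-(c₀*t)) := by
      intro t ht
      have ht0 : (0:ℝ) < t := ht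
      rcases hρne.lt_or_gt with hlt | hgt
      · -- ρ < 2/δ
        have hδρ2 : ρ*δ < 2 := (lt_div_iff₀ hδ).1 hlt
        have hu0 : (0:ℝ) < 4 - δ^2*ρ^2 := by
          nlinarith [mul_nonneg (mul_pos hρ0 hδ).le (by linarith : (0:ℝ) ≤ 2 - ρ*δ)]
        set s : ℝ := Real.sqrt (4 - δ^2*ρ^2) with hs_def
        have hs2 : s^2 = 4 - δ^2*ρ^2 := Real.sq_sqrt hu0.le
        have hs0 : 0 < s := Real.sqrt_pos.2 hu0
        have hm := hm₂ t ρ hρ0 hlt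
        have hE : (Real.exp (-(δ*ρ^2*t)/2))^2 = Real.exp (-(δ*ρ^2*t)) := by
          rw [sq, ← Real.exp_add]; ring_nf
        have hcoefsq : (2/(ρ*s))^2 * (t*ρ*s/2)^2 = t^2 := by
          rw [← mul_pow]
          congr 1
          field_simp
        have hexpmono : Real.exp (-(δ*ρ^2*t)) ≤ Real.exp (-(c₀*t)) := by
          apply Real.exp_le_exp.2
          have := mul_le_mul_of_nonneg_right hc₀ρ ht0.le
          linarith
        rw [hm]
        calc ((2/(ρ*s)) * Real.exp (-(δ*ρ^2*t)/2) * Real.sin (t*ρ*s/2))^2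
            = (2/(ρ*s))^2 * Real.sin (t*ρ*s/2)^2 * (Real.exp (-(δ*ρ^2*t)/2))^2 := by ring
          _ ≤ (2/(ρ*s))^2 * (t*ρ*s/2)^2 * (Real.exp (-(δ*ρ^2*t)/2))^2 := by
              apply mul_le_mul_of_nonneg_right _ (sq_nonneg _)
              exact mul_le_mul_of_nonneg_left (Real.sin_sq_le_sq) (by positivity)
          _ = t^2 * Real.exp (-(δ*ρ^2*t)) := by rw [hcoefsq, hE]
          _ ≤ t^2 * Real.exp (-(c₀*t)) :=
              mul_le_mul_of_nonneg_left hexpmono (sq_nonneg _)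
      · -- 2/δ < ρ
        have hδρ2 : 2 < δ*ρ := by
          rw [div_lt_iff₀ hδ] at hgt; linarith
        have hD : (0:ℝ) < δ^2*ρ^2 - 4 := by nlinarith
        set s : ℝ := Real.sqrt (δ^2*ρ^2 - 4) with hs_def
        have hs2 : s^2 = δ^2*ρ^2 - 4 := Real.sq_sqrt hD.le
        have hs0 : 0 < s := Real.sqrt_pos.2 hD
        have hkey : -(δ*ρ^2) + ρ*s ≤ -(2/δ) := aux_key hδ hρ0 hδρ2
        have hm := hm₁ t ρ hgt
        have hE2 : Real.exp ((-(δ*ρ^2) - ρ*s)*t/2)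
            = Real.exp ((-(δ*ρ^2) + ρ*s)*t/2) * Real.exp (-(ρ*s*t)) := by
          rw [← Real.exp_add]; congr 1; ring
        have h1' : 1 - Real.exp (-(ρ*s*t)) ≤ ρ*s*t := by
          linarith [Real.add_one_le_exp (-(ρ*s*t))]
        have hdiff0 : 0 ≤ Real.exp ((-(δ*ρ^2) + ρ*s)*t/2) - Real.exp ((-(δ*ρ^2) - ρ*s)*t/2) := by
          have : Real.exp ((-(δ*ρ^2) - ρ*s)*t/2) ≤ Real.exp ((-(δ*ρ^2) + ρ*s)*t/2) := by
            apply Real.exp_le_exp.2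
            nlinarith [mul_nonneg (mul_nonneg hρ0.le hs0.le) ht0.le]
          linarith
        have hdiffle : Real.exp ((-(δ*ρ^2) + ρ*s)*t/2) - Real.exp ((-(δ*ρ^2) - ρ*s)*t/2)
            ≤ ρ*s*t * Real.exp ((-(δ*ρ^2) + ρ*s)*t/2) := by
          calc Real.exp ((-(δ*ρ^2) + ρ*s)*t/2) - Real.exp ((-(δ*ρ^2) - ρ*s)*t/2)
              = Real.exp ((-(δ*ρ^2) + ρ*s)*t/2) * (1 - Real.exp (-(ρ*s*t))) := by
                rw [hE2]; ring
            _ ≤ Real.exp ((-(δ*ρ^2) + ρ*s)*t/2) * (ρ*s*t) :=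
                mul_le_mul_of_nonneg_left h1' (Real.exp_pos _).le
            _ = ρ*s*t * Real.exp ((-(δ*ρ^2) + ρ*s)*t/2) := by ring
        have hcoefsq : (1/(ρ*s))^2 * (ρ*s*t)^2 = t^2 := by
          rw [← mul_pow]
          congr 1
          field_simp
        have hEsq : (Real.exp ((-(δ*ρ^2) + ρ*s)*t/2))^2 ≤ Real.exp (-(c₀*t)) := by
          have hE3 : (Real.exp ((-(δ*ρ^2) + ρ*s)*t/2))^2 = Real.exp ((-(δ*ρ^2) + ρ*s)*t) := by
            rw [sq, ← Real.exp_add]; ring_nf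
          rw [hE3]
          apply Real.exp_le_exp.2
          have p1 := mul_le_mul_of_nonneg_right hkey ht0.le
          have p2 := mul_le_mul_of_nonneg_right (min_le_right (δ*a^2) (2/δ)) ht0.le
          rw [← hc₀_def] at p2
          linarith
        rw [hm]
        calc ((1/(ρ*s)) * (Real.exp ((-(δ*ρ^2) + ρ*s)*t/2) - Real.exp ((-(δ*ρ^2) - ρ*s)*t/2)))^2
            = (1/(ρ*s))^2 * (Real.exp ((-(δ*ρ^2) + ρ*s)*t/2) - Real.exp ((-(δ*ρ^2) - ρ*s)*t/2))^2 := by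
              ring
          _ ≤ (1/(ρ*s))^2 * (ρ*s*t * Real.exp ((-(δ*ρ^2) + ρ*s)*t/2))^2 := by
              apply mul_le_mul_of_nonneg_left _ (by positivity)
              exact pow_le_pow_left₀ hdiff0 hdiffle 2
          _ = ((1/(ρ*s))^2 * (ρ*s*t)^2) * (Real.exp ((-(δ*ρ^2) + ρ*s)*t/2))^2 := by ring
          _ = t^2 * (Real.exp ((-(δ*ρ^2) + ρ*s)*t/2))^2 := by rw [hcoefsq]
          _ ≤ t^2 * Real.exp (-(c₀*t)) :=
              mul_le_mul_of_nonneg_left hEsq (sq_nonneg _)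
    have hpoint : ∀ t ∈ Set.Ioi (0:ℝ), K t ρ^2 ≤
        (ρ^α*J ρ)^2 * ((16/c₀^2) * Real.exp (-(c₀/2*t))) := by
      intro t ht
      have ht0 : (0:ℝ) < t := ht
      calc K t ρ^2 = m t ρ^2 * (ρ^α*J ρ)^2 := hKsq t ρ
        _ ≤ (t^2 * Real.exp (-(c₀*t))) * (ρ^α*J ρ)^2 :=
            mul_le_mul_of_nonneg_right (hmsq t ht) (sq_nonneg _)
        _ ≤ ((16/c₀^2) * Real.exp (-(c₀/2*t))) * (ρ^α*J ρ)^2 :=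
            mul_le_mul_of_nonneg_right (aux_sq_exp t hc₀ ht0.le) (sq_nonneg _)
        _ = (ρ^α*J ρ)^2 * ((16/c₀^2) * Real.exp (-(c₀/2*t))) := by ring
    have hbound := aux_lint_bound (fun t => K t ρ^2) ((ρ^α*J ρ)^2) (16/c₀^2) (c₀/2)
      (sq_nonneg _) (div_nonneg (by norm_num) (sq_nonneg _)) (half_pos hc₀) hpoint
    refine hbound.trans (ENNReal.ofReal_le_ofReal ?_)
    have hJC : J ρ^2 ≤ C^2 := by
      have habs : |J ρ| ≤ C := by
        rcases lt_or_ge ρ 1 with h|h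
        · refine (hJ₁ ρ hρ0 h).trans ?_
          have hl : (0:ℝ) ≤ (l:ℝ) := Nat.cast_nonneg l
          have hn2 : (2:ℝ) ≤ (n:ℝ) := by exact_mod_cast hn
          have := Real.rpow_le_one hρ0.le h.le (by linarith : (0:ℝ) ≤ (l:ℝ) + ((n:ℝ)-2)/2)
          nlinarith
        · refine (hJ₂ ρ h).trans ?_
          have := Real.rpow_le_one_of_one_le_of_nonpos h (by norm_num : (-(1:ℝ)/2) ≤ 0)
          nlinarith
      calc J ρ^2 = |J ρ|^2 := (sq_abs _).symm
        _ ≤ C^2 := pow_le_pow_left₀ (abs_nonneg _) habs 2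
    have hρ2α : ρ^(2*α) ≤ a^(2*α)+b^(2*α) := by
      rcases le_or_gt 0 (2*α) with h|h
      · have h1 : ρ^(2*α) ≤ b^(2*α) := Real.rpow_le_rpow hρ0.le hρb h
        linarith [Real.rpow_nonneg ha0.le (2*α)]
      · have h1 : ρ^(2*α) ≤ a^(2*α) := Real.rpow_le_rpow_of_nonpos ha0 haρ h.le
        linarith [Real.rpow_nonneg hb0.le (2*α)]
    have hcJle : (ρ^α*J ρ)^2 ≤ (a^(2*α)+b^(2*α))*C^2 := by
      rw [mul_pow, aux_rpow_sq hρ0.le]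
      exact mul_le_mul hρ2α hJC (sq_nonneg _)
        (by positivity)
    calc (ρ^α*J ρ)^2 * (16/c₀^2) * (1/(c₀/2))
        = (ρ^α*J ρ)^2 * ((16/c₀^2) * (1/(c₀/2))) := by ring
      _ ≤ ((a^(2*α)+b^(2*α))*C^2) * ((16/c₀^2) * (1/(c₀/2))) :=
          mul_le_mul_of_nonneg_right hcJle (by positivity)
  -- integrability of the three majorants
  have hexp1 : (-1:ℝ) < 2*α + (2*(l:ℝ)+(n:ℝ)-6) := by
    have hl : (0:ℝ) ≤ (l:ℝ) := Nat.cast_nonneg l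
    linarith
  have hInt1 : IntegrableOn (fun ρ : ℝ => (2*C^2/δ) * ρ^(2*α + (2*(l:ℝ)+(n:ℝ)-6)))
      (Set.Ioo 0 a) := by
    have h1 : IntervalIntegrable (fun x : ℝ => x ^ (2*α + (2*(l:ℝ)+(n:ℝ)-6))) volume 0 a :=
      intervalIntegral.intervalIntegrable_rpow' hexp1
    rw [intervalIntegrable_iff_integrableOn_Ioo_of_le ha0.le] at h1
    exact h1.const_mul _
  have hInt3 : IntegrableOn (fun ρ : ℝ => (C^2/δ) * ρ^(2*α - 5)) (Set.Ioi b) := by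
    have h1 : IntegrableOn (fun x : ℝ => x ^ (2*α - 5)) (Set.Ioi b) :=
      integrableOn_Ioi_rpow_of_lt (by linarith) hb0
    exact h1.const_mul _
  have h1top : (∫⁻ ρ in Set.Ioo (0:ℝ) a, ∫⁻ t in Set.Ioi (0:ℝ),
      ENNReal.ofReal (K t ρ^2)) < ⊤ :=
    lt_of_le_of_lt (setLIntegral_mono' measurableSet_Ioo hR1) hInt1.setLIntegral_lt_top
  have h3top : (∫⁻ ρ in Set.Ioi b, ∫⁻ t in Set.Ioi (0:ℝ),
      ENNReal.ofReal (K t ρ^2)) < ⊤ :=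
    lt_of_le_of_lt (setLIntegral_mono' measurableSet_Ioi hR3) hInt3.setLIntegral_lt_top
  have h2top : (∫⁻ ρ in Set.Icc a b, ∫⁻ t in Set.Ioi (0:ℝ),
      ENNReal.ofReal (K t ρ^2)) < ⊤ := by
    have hne : ∀ᵐ (ρ:ℝ), ρ ≠ 2/δ := by
      rw [ae_iff]
      simp only [ne_eq, not_not, setOf_eq_eq_singleton]
      exact measure_singleton _
    have h2le : (∫⁻ ρ in Set.Icc a b, ∫⁻ t in Set.Ioi (0:ℝ), ENNReal.ofReal (K t ρ^2))
        ≤ ∫⁻ _ρ in Set.Icc a b, ENNReal.ofReal M₂ := by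
      apply setLIntegral_mono_ae' measurableSet_Icc
      filter_upwards [hne] with ρ h hmem using hR2 ρ hmem h
    refine lt_of_le_of_lt h2le ?_
    rw [setLIntegral_const]
    exact ENNReal.mul_lt_top ENNReal.ofReal_lt_top
      (by rw [Real.volume_Icc]; exact ENNReal.ofReal_lt_top)
  have hcover : Set.Ioi (0:ℝ) ⊆ Set.Ioo 0 a ∪ (Set.Icc a b ∪ Set.Ioi b) := by
    intro x hx
    rcases lt_or_ge x a with h|h
    · exact Or.inl ⟨hx, h⟩
    · rcases le_or_gt x b with h'|h'
      · exact Or.inr (Or.inl ⟨h, h'⟩)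
      · exact Or.inr (Or.inr h')
  calc (∫⁻ ρ in Set.Ioi (0:ℝ), ∫⁻ t in Set.Ioi (0:ℝ), ENNReal.ofReal ((K t ρ)^2))
      ≤ ∫⁻ ρ in (Set.Ioo 0 a ∪ (Set.Icc a b ∪ Set.Ioi b)), ∫⁻ t in Set.Ioi (0:ℝ),
          ENNReal.ofReal ((K t ρ)^2) := lintegral_mono_set hcover
    _ ≤ (∫⁻ ρ in Set.Ioo (0:ℝ) a, ∫⁻ t in Set.Ioi (0:ℝ), ENNReal.ofReal ((K t ρ)^2))
        + (∫⁻ ρ in (Set.Icc a b ∪ Set.Ioi b), ∫⁻ t in Set.Ioi (0:ℝ),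
            ENNReal.ofReal ((K t ρ)^2)) := lintegral_union_le _ _ _
    _ ≤ (∫⁻ ρ in Set.Ioo (0:ℝ) a, ∫⁻ t in Set.Ioi (0:ℝ), ENNReal.ofReal ((K t ρ)^2))
        + ((∫⁻ ρ in Set.Icc a b, ∫⁻ t in Set.Ioi (0:ℝ), ENNReal.ofReal ((K t ρ)^2))
          + (∫⁻ ρ in Set.Ioi b, ∫⁻ t in Set.Ioi (0:ℝ), ENNReal.ofReal ((K t ρ)^2))) :=
        add_le_add le_rfl (lintegral_union_le _ _ _)
    _ < ⊤ := ENNReal.add_lt_top.2 ⟨h1top, ENNReal.add_lt_top.2 ⟨h2top, h3top⟩⟩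
end

section
/- Let n ≥ 2, l ∈ ℕ, γ > 0, and −(n−3)/2 < α < 1. Let m(t,ρ) be the weakly damped wave multiplier: m(t,ρ) = (1/√(γ² − 4ρ²))·(e^{(−γ + √(γ² − 4ρ²))t/2} − e^{(−γ − √(γ² − 4ρ²))t/2}) if 0 < ρ < γ/2, and m(t,ρ) = (2/√(4ρ² − γ²))·e^{−γt/2}·sin(t√(4ρ² − γ²)/2) if ρ > γ/2. Suppose J : (0,∞) → ℝ is a measurable function for which there is a constant C > 0 with |J(ρ)| ≤ C·ρ^{l+(n−2)/2} for 0 < ρ < 1 and |J(ρ)| ≤ C·ρ^{−1/2} for ρ ≥ 1. Then, with K(t,ρ) = m(t,ρ)·ρ^α·J(ρ), one has ∫₀^∞ ∫₀^∞ |K(t,ρ)|² dt dρ < ∞. -/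
open MeasureTheory

private lemma aux_exp_sq (x : ℝ) : (Real.exp x) ^ 2 = Real.exp (2 * x) := by
  rw [sq, ← Real.exp_add]; congr 1; ring

private lemma aux_sq_le_of_abs_le {a b : ℝ} (h : |a| ≤ b) : a ^ 2 ≤ b ^ 2 := by
  rw [← sq_abs]; exact pow_le_pow_left₀ (abs_nonneg _) h 2

private lemma aux_le_exp (u : ℝ) : u ≤ Real.exp u := by
  linarith [Real.add_one_le_exp u]

private lemma aux_t_le {b : ℝ} (hb : 0 < b) (t : ℝ) : t ≤ b⁻¹ * Real.exp (b * t) := by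
  have h := aux_le_exp (b * t)
  calc t = b⁻¹ * (b * t) := by field_simp
    _ ≤ b⁻¹ * Real.exp (b * t) := by
        exact mul_le_mul_of_nonneg_left h (inv_nonneg.mpr hb.le)

private lemma aux_exp_sub_le {x y : ℝ} (h : y ≤ x) :
    Real.exp x - Real.exp y ≤ (x - y) * Real.exp x := by
  have h1 : Real.exp x * Real.exp (y - x) = Real.exp y := by
    rw [← Real.exp_add]; congr 1; ring
  have h2 := Real.add_one_le_exp (y - x)
  nlinarith [Real.exp_pos x]

private lemma aux_lint_exp {c : ℝ} (hc : 0 < c) {A : ℝ} (hA : 0 ≤ A) :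
    (∫⁻ t in Set.Ioi (0:ℝ), ENNReal.ofReal (A * Real.exp (-(c * t)))) =
      ENNReal.ofReal (A / c) := by
  have hint : IntegrableOn (fun t : ℝ => A * Real.exp (-(c * t))) (Set.Ioi 0) := by
    have h := (exp_neg_integrableOn_Ioi 0 hc).const_mul A
    simpa [neg_mul, IntegrableOn] using h
  rw [← ofReal_integral_eq_lintegral_ofReal hint
      (Filter.Eventually.of_forall fun t => by positivity)]
  congr 1
  rw [MeasureTheory.integral_const_mul]
  have h2 : ∫ t in Set.Ioi (0:ℝ), Real.exp (-(c * t)) = c⁻¹ := by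
    have h := integral_comp_mul_left_Ioi (fun y => Real.exp (-y)) 0 hc
    simp only [mul_zero, integral_exp_neg_Ioi, neg_zero, Real.exp_zero, smul_eq_mul,
      mul_one] at h
    exact h
  rw [h2, div_eq_mul_inv]

private lemma aux_lint_sq_le {f : ℝ → ℝ} {A c D : ℝ} (hc : 0 < c) (hA : 0 ≤ A)
    (hb : ∀ t : ℝ, 0 < t → (f t) ^ 2 ≤ A * Real.exp (-(c * t)))
    (hD : A / c ≤ D) :
    (∫⁻ t in Set.Ioi (0:ℝ), ENNReal.ofReal ((f t) ^ 2)) ≤ ENNReal.ofReal D := by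
  calc (∫⁻ t in Set.Ioi (0:ℝ), ENNReal.ofReal ((f t) ^ 2))
      ≤ ∫⁻ t in Set.Ioi (0:ℝ), ENNReal.ofReal (A * Real.exp (-(c * t))) :=
        setLIntegral_mono' measurableSet_Ioi fun t ht =>
          ENNReal.ofReal_le_ofReal (hb t ht)
    _ = ENNReal.ofReal (A / c) := aux_lint_exp hc hA
    _ ≤ ENNReal.ofReal D := ENNReal.ofReal_le_ofReal hD

private lemma aux_G_le {C γ α β ρ : ℝ} (hγ : 0 < γ) (hρ : 0 < ρ) {Jv : ℝ}
    (hJ : |Jv| ≤ C * ρ ^ β) :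
    (ρ ^ α * Jv) ^ 2 * (16384 / γ / ρ ^ 2) ≤
      (C ^ 2 * (16384 / γ)) * ρ ^ (2 * α + 2 * β - 2) := by
  have hrpow : ρ ^ (2 * α + 2 * β - 2) = (ρ ^ α) ^ 2 * (ρ ^ β) ^ 2 / ρ ^ 2 := by
    rw [show 2 * α + 2 * β - 2 = (α + α) + (β + β) - ((2 : ℕ) : ℝ) by push_cast; ring,
      Real.rpow_sub hρ, Real.rpow_natCast, Real.rpow_add hρ, Real.rpow_add hρ, Real.rpow_add hρ]
    ring
  have hJ2 : Jv ^ 2 ≤ C ^ 2 * (ρ ^ β) ^ 2 := by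
    have h := aux_sq_le_of_abs_le hJ
    calc Jv ^ 2 ≤ (C * ρ ^ β) ^ 2 := h
      _ = C ^ 2 * (ρ ^ β) ^ 2 := by ring
  calc (ρ ^ α * Jv) ^ 2 * (16384 / γ / ρ ^ 2)
      = Jv ^ 2 * ((ρ ^ α) ^ 2 * (16384 / γ) / ρ ^ 2) := by ring
    _ ≤ (C ^ 2 * (ρ ^ β) ^ 2) * ((ρ ^ α) ^ 2 * (16384 / γ) / ρ ^ 2) := by
        exact mul_le_mul_of_nonneg_right hJ2 (by positivity)
    _ = (C ^ 2 * (16384 / γ)) * ((ρ ^ α) ^ 2 * (ρ ^ β) ^ 2 / ρ ^ 2) := by ring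
    _ = (C ^ 2 * (16384 / γ)) * ρ ^ (2 * α + 2 * β - 2) := by rw [hrpow]

set_option maxHeartbeats 2000000 in
/-- Remark after Lemma 4.1, weakly damped case. For `n ≥ 2`,
`l ∈ ℕ`, `γ > 0` and `-(n-3)/2 < α < 1`, the kernel
`K(t,ρ) = m(t,ρ) ρ^α J(ρ)` is square integrable on `(0,∞) × (0,∞)`, where `m` is
the weakly damped wave multiplier and `J` is any measurable function
satisfying the Bessel-type bounds `|J(ρ)| ≤ C ρ^{l+(n-2)/2}` for `0 < ρ < 1` and
`|J(ρ)| ≤ C ρ^{-1/2}` for `ρ ≥ 1`. -/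
theorem kernel_square_integrable_weak
    (n : ℕ) (hn : 2 ≤ n) (l : ℕ) (γ α : ℝ) (hγ : 0 < γ)
    (hα₁ : -(((n : ℝ) - 3) / 2) < α) (hα₂ : α < 1)
    (m : ℝ → ℝ → ℝ)
    (hm₁ : ∀ t ρ : ℝ, 0 < ρ → ρ < γ / 2 → m t ρ =
      (1 / Real.sqrt (γ ^ 2 - 4 * ρ ^ 2)) *
        (Real.exp ((-γ + Real.sqrt (γ ^ 2 - 4 * ρ ^ 2)) * t / 2) -
          Real.exp ((-γ - Real.sqrt (γ ^ 2 - 4 * ρ ^ 2)) * t / 2)))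
    (hm₂ : ∀ t ρ : ℝ, γ / 2 < ρ → m t ρ =
      (2 / Real.sqrt (4 * ρ ^ 2 - γ ^ 2)) * Real.exp (-(γ * t) / 2) *
        Real.sin (t * Real.sqrt (4 * ρ ^ 2 - γ ^ 2) / 2))
    (J : ℝ → ℝ) (hJmeas : Measurable J) (C : ℝ) (hC : 0 < C)
    (hJ₁ : ∀ ρ : ℝ, 0 < ρ → ρ < 1 → |J ρ| ≤ C * ρ ^ ((l : ℝ) + ((n : ℝ) - 2) / 2))
    (hJ₂ : ∀ ρ : ℝ, 1 ≤ ρ → |J ρ| ≤ C * ρ ^ (-(1 : ℝ) / 2))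
    (K : ℝ → ℝ → ℝ) (hK : ∀ t ρ : ℝ, K t ρ = m t ρ * ρ ^ α * J ρ) :
    (∫⁻ ρ in Set.Ioi (0 : ℝ), ∫⁻ t in Set.Ioi (0 : ℝ),
        ENNReal.ofReal ((K t ρ) ^ 2)) < ⊤ := by
  -- the inner integral bound
  have hI : ∀ ρ : ℝ, 0 < ρ → ρ ≠ γ / 2 →
      (∫⁻ t in Set.Ioi (0:ℝ), ENNReal.ofReal ((m t ρ) ^ 2)) ≤
        ENNReal.ofReal (16384 / γ / ρ ^ 2) := by
    intro ρ hρ hne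
    rcases lt_or_gt_of_ne hne with hlt | hgt
    · -- underdamped range 0 < ρ < γ/2
      have hpos : 0 < γ ^ 2 - 4 * ρ ^ 2 := by nlinarith
      set δ := Real.sqrt (γ ^ 2 - 4 * ρ ^ 2) with hδdef
      have hδpos : 0 < δ := Real.sqrt_pos.mpr hpos
      have hδsq : δ ^ 2 = γ ^ 2 - 4 * ρ ^ 2 := Real.sq_sqrt hpos.le
      have hδγ : γ * δ ≤ γ ^ 2 - 2 * ρ ^ 2 := by
        nlinarith [mul_pos hγ hδpos, sq_nonneg ρ, sq_nonneg (ρ ^ 2)]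
      have hcoef : δ - γ ≤ -(2 * ρ ^ 2 / γ) := by
        have h : 2 * ρ ^ 2 / γ ≤ γ - δ := by
          rw [div_le_iff₀ hγ]; nlinarith
        linarith
      rcases le_or_gt ρ (γ / 4) with hsm | hmd
      · -- small ρ
        refine aux_lint_sq_le (c := 2 * ρ ^ 2 / γ) (by positivity)
          (A := 4 / (3 * γ ^ 2)) (by positivity) ?_ ?_
        · intro t ht
          rw [hm₁ t ρ hρ hlt, ← hδdef]
          have hyx : (-γ - δ) * t / 2 ≤ (-γ + δ) * t / 2 := by nlinarith [hδpos.le, ht.le]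
          have h0 : 0 ≤ Real.exp ((-γ + δ) * t / 2) - Real.exp ((-γ - δ) * t / 2) := by
            linarith [Real.exp_le_exp.mpr hyx]
          have h1 : Real.exp ((-γ + δ) * t / 2) - Real.exp ((-γ - δ) * t / 2) ≤
              Real.exp ((-γ + δ) * t / 2) := by
            linarith [Real.exp_pos ((-γ - δ) * t / 2)]
          have hδ2 : 3 * γ ^ 2 / 4 ≤ δ ^ 2 := by nlinarith
          have hE2 : (Real.exp ((-γ + δ) * t / 2)) ^ 2 = Real.exp ((δ - γ) * t) := by
            rw [aux_exp_sq]; congr 1; ring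
          have hexp : Real.exp ((δ - γ) * t) ≤ Real.exp (-(2 * ρ ^ 2 / γ * t)) := by
            apply Real.exp_le_exp.mpr
            nlinarith [mul_le_mul_of_nonneg_right hcoef ht.le]
          calc (1 / δ * (Real.exp ((-γ + δ) * t / 2) - Real.exp ((-γ - δ) * t / 2))) ^ 2
              = (Real.exp ((-γ + δ) * t / 2) - Real.exp ((-γ - δ) * t / 2)) ^ 2 * (δ ^ 2)⁻¹ := by
                rw [mul_pow]; ring
            _ ≤ (Real.exp ((-γ + δ) * t / 2)) ^ 2 * (δ ^ 2)⁻¹ := by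
                exact mul_le_mul_of_nonneg_right (pow_le_pow_left₀ h0 h1 2) (by positivity)
            _ = Real.exp ((δ - γ) * t) * (δ ^ 2)⁻¹ := by rw [hE2]
            _ ≤ Real.exp (-(2 * ρ ^ 2 / γ * t)) * (3 * γ ^ 2 / 4)⁻¹ := by
                exact mul_le_mul hexp (by
                  exact inv_anti₀ (by positivity) hδ2) (by positivity)
                  (Real.exp_pos _).le
            _ = 4 / (3 * γ ^ 2) * Real.exp (-(2 * ρ ^ 2 / γ * t)) := by ring
        · have e : (4 / (3 * γ ^ 2)) / (2 * ρ ^ 2 / γ) = 2 / (3 * (γ * ρ ^ 2)) := by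
            field_simp; ring
          rw [e, div_div]
          exact div_le_div₀ (by norm_num) (by norm_num) (by positivity)
            (by nlinarith [mul_pos hγ (pow_pos hρ 2)])
      · -- γ/4 < ρ < γ/2
        refine aux_lint_sq_le (c := γ / 16) (by positivity)
          (A := 1024 / γ ^ 2) (by positivity) ?_ ?_
        · intro t ht
          rw [hm₁ t ρ hρ hlt, ← hδdef]
          have hyx : (-γ - δ) * t / 2 ≤ (-γ + δ) * t / 2 := by nlinarith [hδpos.le, ht.le]
          have h0 : 0 ≤ Real.exp ((-γ + δ) * t / 2) - Real.exp ((-γ - δ) * t / 2) := by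
            linarith [Real.exp_le_exp.mpr hyx]
          have hdiff : Real.exp ((-γ + δ) * t / 2) - Real.exp ((-γ - δ) * t / 2) ≤
              (δ * t) * Real.exp ((-γ + δ) * t / 2) := by
            have h := aux_exp_sub_le hyx
            have he : (-γ + δ) * t / 2 - (-γ - δ) * t / 2 = δ * t := by ring
            rw [he] at h; exact h
          have hub : 1 / δ * (Real.exp ((-γ + δ) * t / 2) - Real.exp ((-γ - δ) * t / 2)) ≤
              t * Real.exp ((-γ + δ) * t / 2) := by
            have := mul_le_mul_of_nonneg_left hdiff (by positivity : (0:ℝ) ≤ 1 / δ)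
            calc 1 / δ * (Real.exp ((-γ + δ) * t / 2) - Real.exp ((-γ - δ) * t / 2))
                ≤ 1 / δ * ((δ * t) * Real.exp ((-γ + δ) * t / 2)) := this
              _ = t * Real.exp ((-γ + δ) * t / 2) := by field_simp
          have hm0 : 0 ≤ 1 / δ * (Real.exp ((-γ + δ) * t / 2) - Real.exp ((-γ - δ) * t / 2)) :=
            mul_nonneg (by positivity) h0
          have hsq : (1 / δ * (Real.exp ((-γ + δ) * t / 2) - Real.exp ((-γ - δ) * t / 2))) ^ 2 ≤
              (t * Real.exp ((-γ + δ) * t / 2)) ^ 2 := pow_le_pow_left₀ hm0 hub 2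
          have hE2 : (Real.exp ((-γ + δ) * t / 2)) ^ 2 = Real.exp ((δ - γ) * t) := by
            rw [aux_exp_sq]; congr 1; ring
          have ht1 : t ≤ 32 / γ * Real.exp (γ / 32 * t) := by
            have h := aux_t_le (b := γ / 32) (by positivity) t
            calc t ≤ (γ / 32)⁻¹ * Real.exp (γ / 32 * t) := h
              _ = 32 / γ * Real.exp (γ / 32 * t) := by rw [inv_div]
          have ht2 : t ^ 2 ≤ 1024 / γ ^ 2 * Real.exp (γ / 16 * t) := by
            have h := pow_le_pow_left₀ ht.le ht1 2
            calc t ^ 2 ≤ (32 / γ * Real.exp (γ / 32 * t)) ^ 2 := h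
              _ = 1024 / γ ^ 2 * (Real.exp (γ / 32 * t)) ^ 2 := by ring
              _ = 1024 / γ ^ 2 * Real.exp (γ / 16 * t) := by
                  rw [aux_exp_sq]; congr 2; ring
          have hrate : Real.exp ((δ - γ) * t) ≤ Real.exp (-(γ / 8 * t)) := by
            apply Real.exp_le_exp.mpr
            have hc2 : δ - γ ≤ -(γ / 8) := by
              have : γ / 8 ≤ 2 * ρ ^ 2 / γ := by
                rw [div_le_div_iff₀ (by norm_num) hγ]; nlinarith
              linarith
            nlinarith [mul_le_mul_of_nonneg_right hc2 ht.le]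
          calc (1 / δ * (Real.exp ((-γ + δ) * t / 2) - Real.exp ((-γ - δ) * t / 2))) ^ 2
              ≤ (t * Real.exp ((-γ + δ) * t / 2)) ^ 2 := hsq
            _ = t ^ 2 * Real.exp ((δ - γ) * t) := by rw [mul_pow, hE2]
            _ ≤ t ^ 2 * Real.exp (-(γ / 8 * t)) := by
                exact mul_le_mul_of_nonneg_left hrate (by positivity)
            _ ≤ (1024 / γ ^ 2 * Real.exp (γ / 16 * t)) * Real.exp (-(γ / 8 * t)) := by
                exact mul_le_mul_of_nonneg_right ht2 (Real.exp_pos _).le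
            _ = 1024 / γ ^ 2 * Real.exp (-(γ / 16 * t)) := by
                rw [mul_assoc, ← Real.exp_add]; congr 2; ring
        · have e : (1024 / γ ^ 2) / (γ / 16) = 16384 / γ ^ 3 := by
            field_simp; ring
          rw [e, div_div]
          have hργ : ρ ≤ γ := by linarith
          exact div_le_div₀ (by norm_num) le_rfl (by positivity)
            (by nlinarith [mul_nonneg (mul_nonneg hγ.le (sub_nonneg.mpr hργ)) (add_pos hγ hρ).le])
    · -- oscillatory range ρ > γ/2
      have hpos : 0 < 4 * ρ ^ 2 - γ ^ 2 := by nlinarith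
      set δ := Real.sqrt (4 * ρ ^ 2 - γ ^ 2) with hδdef
      have hδpos : 0 < δ := Real.sqrt_pos.mpr hpos
      have hδsq : δ ^ 2 = 4 * ρ ^ 2 - γ ^ 2 := Real.sq_sqrt hpos.le
      rcases le_or_gt ρ γ with hle | hbig
      · -- γ/2 < ρ ≤ γ
        refine aux_lint_sq_le (c := γ / 2) (by positivity)
          (A := 16 / γ ^ 2) (by positivity) ?_ ?_
        · intro t ht
          rw [hm₂ t ρ hgt, ← hδdef]
          have hsin : |Real.sin (t * δ / 2)| ≤ t * δ / 2 := by
            have h := Real.abs_sin_le_abs (x := t * δ / 2)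
            rwa [abs_of_nonneg (div_nonneg (mul_nonneg ht.le hδpos.le) (by norm_num))] at h
          have habs : |2 / δ * Real.exp (-(γ * t) / 2) * Real.sin (t * δ / 2)| ≤
              t * Real.exp (-(γ * t) / 2) := by
            rw [abs_mul, abs_mul, abs_of_pos (div_pos two_pos hδpos),
              abs_of_pos (Real.exp_pos _)]
            calc 2 / δ * Real.exp (-(γ * t) / 2) * |Real.sin (t * δ / 2)|
                ≤ 2 / δ * Real.exp (-(γ * t) / 2) * (t * δ / 2) := by
                  exact mul_le_mul_of_nonneg_left hsin (by positivity)
              _ = t * Real.exp (-(γ * t) / 2) := by field_simp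
          have hsq := aux_sq_le_of_abs_le habs
          have hE2 : (Real.exp (-(γ * t) / 2)) ^ 2 = Real.exp (-(γ * t)) := by
            rw [aux_exp_sq]; congr 1; ring
          have ht1 : t ≤ 4 / γ * Real.exp (γ / 4 * t) := by
            have h := aux_t_le (b := γ / 4) (by positivity) t
            calc t ≤ (γ / 4)⁻¹ * Real.exp (γ / 4 * t) := h
              _ = 4 / γ * Real.exp (γ / 4 * t) := by rw [inv_div]
          have ht2 : t ^ 2 ≤ 16 / γ ^ 2 * Real.exp (γ / 2 * t) := by
            have h := pow_le_pow_left₀ ht.le ht1 2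
            calc t ^ 2 ≤ (4 / γ * Real.exp (γ / 4 * t)) ^ 2 := h
              _ = 16 / γ ^ 2 * (Real.exp (γ / 4 * t)) ^ 2 := by ring
              _ = 16 / γ ^ 2 * Real.exp (γ / 2 * t) := by rw [aux_exp_sq]; congr 2; ring
          calc (2 / δ * Real.exp (-(γ * t) / 2) * Real.sin (t * δ / 2)) ^ 2
              ≤ (t * Real.exp (-(γ * t) / 2)) ^ 2 := hsq
            _ = t ^ 2 * Real.exp (-(γ * t)) := by rw [mul_pow, hE2]
            _ ≤ (16 / γ ^ 2 * Real.exp (γ / 2 * t)) * Real.exp (-(γ * t)) := by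
                exact mul_le_mul_of_nonneg_right ht2 (Real.exp_pos _).le
            _ = 16 / γ ^ 2 * Real.exp (-(γ / 2 * t)) := by
                rw [mul_assoc, ← Real.exp_add]; congr 2; ring
        · have e : (16 / γ ^ 2) / (γ / 2) = 32 / γ ^ 3 := by field_simp; ring
          rw [e, div_div]
          exact div_le_div₀ (by norm_num) (by norm_num) (by positivity)
            (by nlinarith [mul_nonneg (mul_nonneg hγ.le (sub_nonneg.mpr hle)) (add_pos hγ hρ).le])
      · -- ρ > γ
        refine aux_lint_sq_le (c := γ) hγ
          (A := 4 / (3 * ρ ^ 2)) (by positivity) ?_ ?_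
        · intro t ht
          rw [hm₂ t ρ hgt, ← hδdef]
          have hsin : |Real.sin (t * δ / 2)| ≤ 1 := Real.abs_sin_le_one _
          have habs : |2 / δ * Real.exp (-(γ * t) / 2) * Real.sin (t * δ / 2)| ≤
              2 / δ * Real.exp (-(γ * t) / 2) := by
            rw [abs_mul, abs_mul, abs_of_pos (div_pos two_pos hδpos),
              abs_of_pos (Real.exp_pos _)]
            calc 2 / δ * Real.exp (-(γ * t) / 2) * |Real.sin (t * δ / 2)|
                ≤ 2 / δ * Real.exp (-(γ * t) / 2) * 1 := by
                  exact mul_le_mul_of_nonneg_left hsin (by positivity)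
              _ = 2 / δ * Real.exp (-(γ * t) / 2) := by ring
          have hsq := aux_sq_le_of_abs_le habs
          have hE2 : (Real.exp (-(γ * t) / 2)) ^ 2 = Real.exp (-(γ * t)) := by
            rw [aux_exp_sq]; congr 1; ring
          have hδ2 : 3 * ρ ^ 2 ≤ δ ^ 2 := by nlinarith
          calc (2 / δ * Real.exp (-(γ * t) / 2) * Real.sin (t * δ / 2)) ^ 2
              ≤ (2 / δ * Real.exp (-(γ * t) / 2)) ^ 2 := hsq
            _ = 4 * (δ ^ 2)⁻¹ * Real.exp (-(γ * t)) := by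
                rw [mul_pow, hE2, div_pow]; ring
            _ ≤ 4 * (3 * ρ ^ 2)⁻¹ * Real.exp (-(γ * t)) := by
                exact mul_le_mul_of_nonneg_right
                  (mul_le_mul_of_nonneg_left (inv_anti₀ (by positivity) hδ2)
                    (by norm_num)) (Real.exp_pos _).le
            _ = 4 / (3 * ρ ^ 2) * Real.exp (-(γ * t)) := by ring
        · have e : (4 / (3 * ρ ^ 2)) / γ = 4 / (3 * (γ * ρ ^ 2)) := by field_simp
          rw [e, div_div]
          exact div_le_div₀ (by norm_num) (by norm_num) (by positivity)
            (by nlinarith [mul_pos hγ (pow_pos hρ 2)])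
  -- the pointwise outer bound
  set G : ℝ → ℝ := fun ρ => (ρ ^ α * J ρ) ^ 2 * (16384 / γ / ρ ^ 2) with hG
  have hF : ∀ ρ : ℝ, 0 < ρ → ρ ≠ γ / 2 →
      (∫⁻ t in Set.Ioi (0:ℝ), ENNReal.ofReal ((K t ρ) ^ 2)) ≤ ENNReal.ofReal (G ρ) := by
    intro ρ hρ hne
    calc (∫⁻ t in Set.Ioi (0:ℝ), ENNReal.ofReal ((K t ρ) ^ 2))
        = ∫⁻ t in Set.Ioi (0:ℝ),
            ENNReal.ofReal ((ρ ^ α * J ρ) ^ 2) * ENNReal.ofReal ((m t ρ) ^ 2) := by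
          refine lintegral_congr fun t => ?_
          rw [show (K t ρ) ^ 2 = (ρ ^ α * J ρ) ^ 2 * (m t ρ) ^ 2 by rw [hK]; ring,
            ENNReal.ofReal_mul (by positivity)]
      _ = ENNReal.ofReal ((ρ ^ α * J ρ) ^ 2) *
            ∫⁻ t in Set.Ioi (0:ℝ), ENNReal.ofReal ((m t ρ) ^ 2) :=
          lintegral_const_mul' _ _ ENNReal.ofReal_ne_top
      _ ≤ ENNReal.ofReal ((ρ ^ α * J ρ) ^ 2) * ENNReal.ofReal (16384 / γ / ρ ^ 2) :=
          mul_le_mul_right (hI ρ hρ hne) _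
      _ = ENNReal.ofReal (G ρ) := by
          rw [hG, ← ENNReal.ofReal_mul (by positivity)]
  have hns : ∀ᵐ ρ : ℝ, ρ ≠ γ / 2 := by
    rw [ae_iff]
    simp only [not_not, Set.setOf_eq_eq_singleton]
    exact measure_singleton _
  have hae : ∀ᵐ ρ ∂(volume.restrict (Set.Ioi (0:ℝ))),
      (∫⁻ t in Set.Ioi (0:ℝ), ENNReal.ofReal ((K t ρ) ^ 2)) ≤ ENNReal.ofReal (G ρ) := by
    filter_upwards [ae_restrict_mem measurableSet_Ioi, ae_restrict_of_ae hns] with ρ h1 h2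
    exact hF ρ h1 h2
  -- finiteness of the outer integral of G
  have hl0 : (0:ℝ) ≤ (l : ℝ) := Nat.cast_nonneg l
  have hn3 : (2:ℝ) ≤ (n : ℝ) := by exact_mod_cast hn
  have fin1 : (∫⁻ ρ in Set.Ioc (0:ℝ) 1, ENNReal.ofReal (G ρ)) < ⊤ := by
    set β₁ : ℝ := (l : ℝ) + ((n : ℝ) - 2) / 2 with hβ₁
    have hexp1 : (-1:ℝ) < 2 * α + 2 * β₁ - 2 := by
      rw [hβ₁]; have : -(((n : ℝ) - 3) / 2) < α := hα₁; linarith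
    have hint : IntegrableOn
        (fun ρ : ℝ => (C ^ 2 * (16384 / γ)) * ρ ^ (2 * α + 2 * β₁ - 2))
        (Set.Ioc (0:ℝ) 1) := by
      have h1 : IntegrableOn (fun ρ : ℝ => ρ ^ (2 * α + 2 * β₁ - 2)) (Set.Ioo (0:ℝ) 1) :=
        (intervalIntegral.integrableOn_Ioo_rpow_iff zero_lt_one).mpr hexp1
      exact (h1.congr_set_ae MeasureTheory.Ioo_ae_eq_Ioc.symm).const_mul _
    calc (∫⁻ ρ in Set.Ioc (0:ℝ) 1, ENNReal.ofReal (G ρ))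
        ≤ ∫⁻ ρ in Set.Ioc (0:ℝ) 1,
            ENNReal.ofReal ((C ^ 2 * (16384 / γ)) * ρ ^ (2 * α + 2 * β₁ - 2)) := by
          refine setLIntegral_mono' measurableSet_Ioc fun ρ hρ => ?_
          refine ENNReal.ofReal_le_ofReal ?_
          have hJb : |J ρ| ≤ C * ρ ^ β₁ := by
            rcases eq_or_lt_of_le hρ.2 with h1 | h1
            · subst h1
              simpa using hJ₂ 1 le_rfl
            · exact hJ₁ ρ hρ.1 h1
          exact aux_G_le hγ hρ.1 hJb
      _ < ⊤ := hint.lintegral_lt_top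
  have fin2 : (∫⁻ ρ in Set.Ioi (1:ℝ), ENNReal.ofReal (G ρ)) < ⊤ := by
    have hexp2 : 2 * α + 2 * (-(1:ℝ)/2) - 2 < -1 := by linarith
    have hint : IntegrableOn
        (fun ρ : ℝ => (C ^ 2 * (16384 / γ)) * ρ ^ (2 * α + 2 * (-(1:ℝ)/2) - 2))
        (Set.Ioi (1:ℝ)) :=
      (integrableOn_Ioi_rpow_of_lt hexp2 zero_lt_one).const_mul _
    calc (∫⁻ ρ in Set.Ioi (1:ℝ), ENNReal.ofReal (G ρ))
        ≤ ∫⁻ ρ in Set.Ioi (1:ℝ),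
            ENNReal.ofReal ((C ^ 2 * (16384 / γ)) * ρ ^ (2 * α + 2 * (-(1:ℝ)/2) - 2)) := by
          refine setLIntegral_mono' measurableSet_Ioi fun ρ hρ => ?_
          refine ENNReal.ofReal_le_ofReal ?_
          exact aux_G_le hγ (lt_trans zero_lt_one hρ) (hJ₂ ρ hρ.le)
      _ < ⊤ := hint.lintegral_lt_top
  calc (∫⁻ ρ in Set.Ioi (0 : ℝ), ∫⁻ t in Set.Ioi (0 : ℝ),
        ENNReal.ofReal ((K t ρ) ^ 2))
      ≤ ∫⁻ ρ in Set.Ioi (0:ℝ), ENNReal.ofReal (G ρ) := lintegral_mono_ae hae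
    _ = ∫⁻ ρ in Set.Ioc (0:ℝ) 1 ∪ Set.Ioi 1, ENNReal.ofReal (G ρ) := by
        rw [Set.Ioc_union_Ioi_eq_Ioi zero_le_one]
    _ ≤ (∫⁻ ρ in Set.Ioc (0:ℝ) 1, ENNReal.ofReal (G ρ)) +
          ∫⁻ ρ in Set.Ioi (1:ℝ), ENNReal.ofReal (G ρ) := lintegral_union_le _ _ _
    _ < ⊤ := ENNReal.add_lt_top.mpr ⟨fin1, fin2⟩
end
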